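/- arXiv:2306.17731 — 4 statements merged into one kernel-verified Lean document; each statement's English description precedes it below -/
import Mathlib

section
/- Let M be either the closed interval [0,1] or the circle. If u is an absolutely continuous real-valued function on M and (φ_n) is a sequence of orientation-preserving C^1 diffeomorphisms of M converging to the identity in the C^1 topology, then the total variation var(u∘φ_n − u) converges to 0 as n → ∞. -/
/-!
Approximate `Du` in `L¹` by a continuous compactly supported `g`. The change of variables
`y = φₙ x` bounds `∫ |Du ∘ φₙ · φₙ' - Du|` by `‖Du - g‖_{L¹(φₙ [0,1])} + ‖g ∘ φₙ · φₙ' - g‖_∞ +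
‖Du - g‖_{L¹[0,1]}`. The outer terms are small uniformly in `n`, and the middle one tends to `0`
since `g` is bounded and uniformly continuous while `φₙ → id` and `φₙ' → 1` uniformly. On the
circle, `φₙ` is first shifted by an integer to make it uniformly close to the identity on `[0,1]`;
by periodicity this does not change `Du ∘ φₙ`.
-/

open Set MeasureTheory Filter Topology

noncomputable section

/-- An orientation-preserving `C¹` diffeomorphism of the interval `[0,1]`, recorded together
with its derivative, and extended by the identity outside of `[0,1]`. -/
structure C1Diffeo : Type where
  toFun : ℝ → ℝ
  derivFun : ℝ → ℝ
  map_zero : toFun 0 = 0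
  map_one : toFun 1 = 1
  fixes_outside : ∀ x : ℝ, x ∉ Icc (0:ℝ) 1 → toFun x = x
  bijOn : BijOn toFun (Icc (0:ℝ) 1) (Icc (0:ℝ) 1)
  hasDeriv : ∀ x ∈ Icc (0:ℝ) 1, HasDerivWithinAt toFun (derivFun x) (Icc (0:ℝ) 1) x
  derivFun_cont : ContinuousOn derivFun (Icc (0:ℝ) 1)
  derivFun_pos : ∀ x ∈ Icc (0:ℝ) 1, 0 < derivFun x

/-- A lift of an orientation-preserving `C¹` diffeomorphism of the circle `ℝ/ℤ`,
recorded together with its derivative. -/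
structure CircC1 : Type where
  toFun : ℝ → ℝ
  derivFun : ℝ → ℝ
  commT : ∀ x : ℝ, toFun (x + 1) = toFun x + 1
  hasDeriv : ∀ x : ℝ, HasDerivAt toFun (derivFun x) x
  derivFun_cont : Continuous derivFun
  derivFun_pos : ∀ x : ℝ, 0 < derivFun x

/-- The uniform (`C⁰`) distance over `[0,1]`. -/
def supDist01 (f g : ℝ → ℝ) : ℝ := ⨆ x : Icc (0:ℝ) 1, |f (x : ℝ) - g (x : ℝ)|

/-- The uniform (`C⁰`) distance between two circle maps given by lifts. -/
def supDistCirc (f g : ℝ → ℝ) : ℝ :=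
  ⨅ k : ℤ, ⨆ x : Icc (0:ℝ) 1, |f (x : ℝ) - (g (x : ℝ) + (k : ℝ))|

lemma setIntegral_abs_comp_mul_deriv_sub_le {s : Set ℝ} (hs : MeasurableSet s)
    (hsμ : volume s ≠ ⊤) {f g ψ ψ' : ℝ → ℝ} {C : ℝ}
    (hψ : ∀ x ∈ s, HasDerivWithinAt ψ (ψ' x) s x) (hinj : InjOn ψ s)
    (hfψ : IntegrableOn f (ψ '' s)) (hf : IntegrableOn f s) (hg : Integrable g)
    (hC : ∀ x ∈ s, |g (ψ x) * ψ' x - g x| ≤ C) :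
    ∫ x in s, |f (ψ x) * ψ' x - f x| ≤
      (∫ y in ψ '' s, |f y - g y|) + volume.real s * C + ∫ x in s, |f x - g x| := by
  set H : ℝ → ℝ := fun y => |f y - g y|
  have hHψ : IntegrableOn (fun x => |ψ' x| * H (ψ x)) s :=
    (integrableOn_image_iff_integrableOn_abs_deriv_smul hs hψ hinj H).1
      (hfψ.sub hg.integrableOn).abs
  have hH : IntegrableOn H s := (hf.sub hg.integrableOn).abs
  have hconst : IntegrableOn (fun _ => C) s := integrableOn_const hsμ
  have hpt : ∀ x ∈ s, |f (ψ x) * ψ' x - f x| ≤ |ψ' x| * H (ψ x) + C + H x := fun x hx =>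
    calc |f (ψ x) * ψ' x - f x|
        = |ψ' x * (f (ψ x) - g (ψ x)) + (g (ψ x) * ψ' x - g x) - (f x - g x)| := by ring_nf
      _ ≤ |ψ' x| * H (ψ x) + C + H x := by grw [abs_sub, abs_add_le, abs_mul, hC x hx]
  calc ∫ x in s, |f (ψ x) * ψ' x - f x|
      ≤ ∫ x in s, (|ψ' x| * H (ψ x) + C + H x) :=
        setIntegral_mono_of_nonneg (fun _ _ => abs_nonneg _) hpt ((hHψ.add hconst).add hH)
    _ = (∫ y in ψ '' s, H y) + volume.real s * C + ∫ x in s, H x := by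
        rw [integral_add (f := fun x => |ψ' x| * H (ψ x) + C) (hHψ.add hconst) hH,
          integral_add hHψ hconst, setIntegral_const, smul_eq_mul,
          integral_image_eq_integral_abs_deriv_smul hs hψ hinj H]
        rfl

lemma exists_continuous_hasCompactSupport_setIntegral_abs_sub_le {K : Set ℝ}
    (hK : MeasurableSet K) {f : ℝ → ℝ} (hf : IntegrableOn f K) {ε : ℝ} (hε : 0 < ε) :
    ∃ g : ℝ → ℝ, Continuous g ∧ HasCompactSupport g ∧ ∫ x in K, |f x - g x| ≤ ε := by
  have hfK : Integrable (K.indicator f) := (integrable_indicator_iff hK).2 hf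
  obtain ⟨g, hgs, hfg, hgc, hg⟩ := hfK.exists_hasCompactSupport_integral_sub_le hε
  refine ⟨g, hgc, hgs, ?_⟩
  calc ∫ x in K, |f x - g x| = ∫ x in K, ‖K.indicator f x - g x‖ :=
        setIntegral_congr_fun hK fun x hx => by rw [indicator_of_mem hx, Real.norm_eq_abs]
    _ ≤ ∫ x, ‖K.indicator f x - g x‖ :=
        setIntegral_le_integral (hfK.sub hg).norm (.of_forall fun _ => norm_nonneg _)
    _ ≤ ε := hfg

lemma tendstoUniformlyOn_comp_mul_of_hasCompactSupport {ι : Type*} {l : Filter ι} {s : Set ℝ}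
    (hs : IsCompact s) {g : ℝ → ℝ} (hgc : Continuous g) (hgs : HasCompactSupport g)
    {ψ ψ' : ι → ℝ → ℝ} (hψ : TendstoUniformlyOn ψ id l s) (hψ' : TendstoUniformlyOn ψ' 1 l s) :
    TendstoUniformlyOn (fun i x => g (ψ i x) * ψ' i x) g l s := by
  have hgψ : TendstoUniformlyOn (fun i => g ∘ ψ i) g l s :=
    (hgs.uniformContinuous_of_continuous hgc).comp_tendstoUniformlyOn hψ
  rw [← tendstoLocallyUniformlyOn_iff_tendstoUniformlyOn_of_compact hs] at *
  simpa [Pi.mul_def, Function.comp_def] using hgψ.mul₀ hψ' hgc.continuousOn continuousOn_const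

theorem tendsto_setIntegral_abs_comp_mul_deriv_sub {ι : Type*} {l : Filter ι} {s K : Set ℝ}
    (hs : IsCompact s) (hK : MeasurableSet K) (hsK : s ⊆ K) {f : ℝ → ℝ} (hf : IntegrableOn f K)
    {ψ ψ' : ι → ℝ → ℝ} (hψ : ∀ i, ∀ x ∈ s, HasDerivWithinAt (ψ i) (ψ' i x) s x)
    (hinj : ∀ i, InjOn (ψ i) s) (hmaps : ∀ᶠ i in l, MapsTo (ψ i) s K)
    (hψu : TendstoUniformlyOn ψ id l s) (hψ'u : TendstoUniformlyOn ψ' 1 l s) :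
    Tendsto (fun i => ∫ x in s, |f (ψ i x) * ψ' i x - f x|) l (𝓝 0) := by
  refine tendsto_order.2 ⟨fun c hc => .of_forall fun i =>
    hc.trans_le (setIntegral_nonneg hs.measurableSet fun _ _ => abs_nonneg _), fun ε hε => ?_⟩
  obtain ⟨g, hgc, hgs, hfg⟩ :=
    exists_continuous_hasCompactSupport_setIntegral_abs_sub_le hK hf (by positivity : 0 < ε / 3)
  obtain ⟨η, hη, hηs⟩ := exists_pos_mul_lt (by positivity : 0 < ε / 3) (volume.real s)
  have hclose : ∀ᶠ i in l, ∀ x ∈ s, |g (ψ i x) * ψ' i x - g x| < η := by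
    simpa [Real.dist_eq, abs_sub_comm] using Metric.tendstoUniformlyOn_iff.1
      (tendstoUniformlyOn_comp_mul_of_hasCompactSupport hs hgc hgs hψu hψ'u) η hη
  have hK_le : ∀ t ⊆ K, ∫ x in t, |f x - g x| ≤ ε / 3 := fun t ht =>
    (setIntegral_mono_set ((hf.sub (hgc.integrable_of_hasCompactSupport hgs).integrableOn).abs)
      (.of_forall fun _ => abs_nonneg _) (.of_forall ht)).trans hfg
  filter_upwards [hmaps, hclose] with i hiK hi
  calc ∫ x in s, |f (ψ i x) * ψ' i x - f x|
      ≤ (∫ y in ψ i '' s, |f y - g y|) + volume.real s * η + ∫ x in s, |f x - g x| :=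
        setIntegral_abs_comp_mul_deriv_sub_le hs.measurableSet hs.measure_lt_top.ne (hψ i)
          (hinj i) (hf.mono_set hiK.image_subset) (hf.mono_set hsK)
          (hgc.integrable_of_hasCompactSupport hgs) fun x hx => (hi x hx).le
    _ < ε := by linarith [hK_le _ hiK.image_subset, hK_le _ hsK]

lemma iSup_abs_nonneg {α : Type*} (F : α → ℝ) : 0 ≤ ⨆ x, |F x| :=
  Real.iSup_nonneg fun _ => abs_nonneg _

lemma abs_le_iSup_abs_of_isCompact {s : Set ℝ} (hs : IsCompact s) {F : ℝ → ℝ}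
    (hF : ContinuousOn F s) {x : ℝ} (hx : x ∈ s) : |F x| ≤ ⨆ y : s, |F y| := by
  obtain ⟨C, hC⟩ := hs.exists_bound_of_continuousOn hF
  exact le_ciSup (f := fun y : s => |F y|) ⟨C, forall_mem_range.2 fun y => hC y y.2⟩ ⟨x, hx⟩

lemma tendstoUniformlyOn_of_iSup_abs_sub_le {ι : Type*} {l : Filter ι} {s : Set ℝ}
    (hs : IsCompact s) {F : ι → ℝ → ℝ} {f : ℝ → ℝ}
    (hc : ∀ i, ContinuousOn (fun x => F i x - f x) s) {a : ι → ℝ} (ha : Tendsto a l (𝓝 0))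
    (hle : ∀ i, ⨆ x : s, |F i x - f x| ≤ a i) :
    TendstoUniformlyOn F f l s := by
  refine Metric.tendstoUniformlyOn_iff.2 fun ε hε => ?_
  filter_upwards [ha.eventually (eventually_lt_nhds hε)] with i hi x hx
  rw [dist_comm, Real.dist_eq]
  exact ((abs_le_iSup_abs_of_isCompact hs (hc i) hx).trans (hle i)).trans_lt hi

lemma TendstoUniformlyOn.eventually_mapsTo_Icc {ι : Type*} {l : Filter ι} {ψ : ι → ℝ → ℝ}
    {a b δ : ℝ} (h : TendstoUniformlyOn ψ id l (Icc a b)) (hδ : 0 < δ) :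
    ∀ᶠ i in l, MapsTo (ψ i) (Icc a b) (Icc (a - δ) (b + δ)) := by
  filter_upwards [Metric.tendstoUniformlyOn_iff.1 h δ hδ] with i hi x hx
  have hxψ := hi x hx
  rw [id, Real.dist_eq, abs_lt] at hxψ
  constructor <;> linarith [hx.1, hx.2]

lemma Function.Periodic.integrableOn_Icc {E : Type*} [NormedAddCommGroup E] {f : ℝ → E} {T : ℝ}
    (hf : Function.Periodic f T) (hT : 0 < T) (h : IntegrableOn f (Icc 0 T)) {a b : ℝ}
    (hab : a ≤ b) : IntegrableOn f (Icc a b) :=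
  (intervalIntegrable_iff_integrableOn_Icc_of_le hab).1 <| hf.intervalIntegrable₀ hT.ne'
    ((intervalIntegrable_iff_integrableOn_Icc_of_le hT.le).2 h) a b

lemma C1Diffeo.continuousOn_toFun (φ : C1Diffeo) : ContinuousOn φ.toFun (Icc 0 1) :=
  fun x hx => (φ.hasDeriv x hx).continuousWithinAt

lemma CircC1.continuous_toFun (φ : CircC1) : Continuous φ.toFun :=
  continuous_iff_continuousAt.2 fun x => (φ.hasDeriv x).continuousAt

lemma CircC1.injective_toFun (φ : CircC1) : Function.Injective φ.toFun :=
  (strictMono_of_deriv_pos fun x => (φ.hasDeriv x).deriv ▸ φ.derivFun_pos x).injective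

lemma CircC1.exists_int_iSup_abs_sub_lt (φ : CircC1) {δ : ℝ} (hδ : 0 < δ) :
    ∃ k : ℤ, ⨆ x : Icc (0:ℝ) 1, |φ.toFun x - k - x| < supDistCirc φ.toFun (fun x => x) + δ := by
  obtain ⟨k, hk⟩ := exists_lt_of_ciInf_lt (lt_add_of_pos_right (supDistCirc φ.toFun _) hδ)
  refine ⟨k, lt_of_eq_of_lt ?_ hk⟩
  simp only [sub_sub, add_comm]

lemma CircC1.exists_tendstoUniformlyOn_sub_int {φ : ℕ → CircC1} {a : ℕ → ℝ}
    (ha : Tendsto a atTop (𝓝 0)) (hle : ∀ n, supDistCirc (φ n).toFun (fun x => x) ≤ a n) :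
    ∃ k : ℕ → ℤ, TendstoUniformlyOn (fun n x => (φ n).toFun x - k n) id atTop (Icc 0 1) := by
  -- the infimum over integer shifts need not be attained, hence the slack `1 / (n + 1)`
  choose k hk using fun n : ℕ =>
    (φ n).exists_int_iSup_abs_sub_lt (Nat.one_div_pos_of_nat (n := n))
  refine ⟨k, tendstoUniformlyOn_of_iSup_abs_sub_le isCompact_Icc
    (fun n => (((φ n).continuous_toFun.sub continuous_const).sub continuous_id).continuousOn)
    (by simpa only [add_zero] using ha.add tendsto_one_div_add_atTop_nhds_zero_nat)
    fun n => (hk n).le.trans (by linarith [hle n])⟩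

/-- Let `M` be either `[0,1]` or the circle. If `u` is an absolutely continuous function on
`M` (with `L¹` "derivative" `Du`), and `(φₙ)` is a sequence of orientation-preserving `C¹`
diffeomorphisms of `M` converging to the identity in the `C¹` topology, then
`var(u ∘ φₙ - u) = ‖Du ∘ φₙ · Dφₙ - Du‖_{L¹}` converges to `0`. -/
theorem var_comp_sub_tendsto_zero :
    -- the case of the interval
    (∀ u Du : ℝ → ℝ, IntegrableOn Du (Icc (0:ℝ) 1) →
      (∀ x ∈ Icc (0:ℝ) 1, u x = u 0 + ∫ t in (0:ℝ)..x, Du t) →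
      ∀ φ : ℕ → C1Diffeo,
        Tendsto (fun n => supDist01 (φ n).toFun (fun x => x) +
          ⨆ x : Icc (0:ℝ) 1, |(φ n).derivFun (x : ℝ) - 1|) atTop (𝓝 0) →
        Tendsto (fun n =>
          ∫ x in Icc (0:ℝ) 1, |Du ((φ n).toFun x) * (φ n).derivFun x - Du x|)
          atTop (𝓝 0)) ∧
    -- the case of the circle
    (∀ u Du : ℝ → ℝ, (∀ x : ℝ, u (x + 1) = u x) → (∀ x : ℝ, Du (x + 1) = Du x) →
      IntegrableOn Du (Icc (0:ℝ) 1) →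
      (∀ x : ℝ, u x = u 0 + ∫ t in (0:ℝ)..x, Du t) →
      ∀ φ : ℕ → CircC1,
        Tendsto (fun n => supDistCirc (φ n).toFun (fun x => x) +
          ⨆ x : Icc (0:ℝ) 1, |(φ n).derivFun (x : ℝ) - 1|) atTop (𝓝 0) →
        Tendsto (fun n =>
          ∫ x in Icc (0:ℝ) 1, |Du ((φ n).toFun x) * (φ n).derivFun x - Du x|)
          atTop (𝓝 0)) := by
  refine ⟨fun u Du hDu _ φ hφ => ?_, fun u Du _ hDup hDu _ φ hφ => ?_⟩
  · exact tendsto_setIntegral_abs_comp_mul_deriv_sub isCompact_Icc measurableSet_Icc subset_rfl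
      hDu (fun n => (φ n).hasDeriv) (fun n => (φ n).bijOn.injOn)
      (.of_forall fun n => (φ n).bijOn.mapsTo)
      (tendstoUniformlyOn_of_iSup_abs_sub_le isCompact_Icc
        (fun n => (φ n).continuousOn_toFun.sub continuousOn_id) hφ
        fun n => le_add_of_nonneg_right (iSup_abs_nonneg _))
      (tendstoUniformlyOn_of_iSup_abs_sub_le isCompact_Icc
        (fun n => (φ n).derivFun_cont.sub continuousOn_const) hφ
        fun n => le_add_of_nonneg_left (iSup_abs_nonneg _))
  · obtain ⟨k, hψ⟩ := CircC1.exists_tendstoUniformlyOn_sub_int hφ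
      fun n => le_add_of_nonneg_right (iSup_abs_nonneg _)
    have hshift : ∀ n x, Du ((φ n).toFun x) = Du ((φ n).toFun x - k n) := fun n x => by
      simpa using (Function.Periodic.sub_int_mul_eq hDup (k n)).symm
    simp only [hshift]
    exact tendsto_setIntegral_abs_comp_mul_deriv_sub (K := Icc (-1) 2) isCompact_Icc
      measurableSet_Icc (Icc_subset_Icc (by norm_num) (by norm_num))
      (Function.Periodic.integrableOn_Icc hDup one_pos (by simpa using hDu) (by norm_num))
      (fun n x _ => (((φ n).hasDeriv x).sub_const _).hasDerivWithinAt)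
      (fun n => (sub_left_injective.comp (φ n).injective_toFun).injOn)
      (by simpa [one_add_one_eq_two] using hψ.eventually_mapsTo_Icc one_pos) hψ
      (tendstoUniformlyOn_of_iSup_abs_sub_le isCompact_Icc
        (fun n => ((φ n).derivFun_cont.sub continuous_const).continuousOn) hφ
        fun n => le_add_of_nonneg_left (Real.iInf_nonneg fun _ => iSup_abs_nonneg _))
end
end

section
/- Consider a C^{1+bv} action of Z^d on [0,1], and suppose some element f of the image group has a fixed point a in the open interval (0,1) with Df(a) ≠ 1 (a hyperbolic fixed point). Then every element g of the image group that does not coincide with the identity on any neighborhood of a satisfies g(a) = a and Dg(a) ≠ 1. -/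
open Set MeasureTheory Filter Topology

noncomputable section

/-- A `C^{1+bv}` diffeomorphism of `[0,1]`: a `C¹` diffeomorphism such that `log Df` has
finite total variation. -/
structure C1bvDiffeo extends C1Diffeo where
  logDeriv_bv : BoundedVariationOn (fun x => Real.log (derivFun x)) (Icc (0:ℝ) 1)

/-- An action of `ℤᵈ` on `[0,1]` by orientation-preserving `C^{1+bv}` diffeomorphisms. -/
structure ZdAction1bv (d : ℕ) where
  elt : (Fin d → ℤ) → C1bvDiffeo
  elt_add : ∀ a b : Fin d → ℤ, ∀ x : ℝ,
    (elt (a + b)).toFun x = (elt a).toFun ((elt b).toFun x)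
  elt_zero : ∀ x : ℝ, (elt 0).toFun x = x

/-- `Φ`, together with its spatial derivative `Φ'`, is a `C¹` flow on the one-dimensional
manifold-with-boundary `s ⊆ ℝ` (extended by the identity outside of `s`): a continuous group
homomorphism from `(ℝ,+)` to the orientation-preserving `C¹` diffeomorphisms of `s` endowed
with the `C¹` topology. -/
def IsC1FlowOn (s : Set ℝ) (Φ Φ' : ℝ → ℝ → ℝ) : Prop :=
  (∀ x : ℝ, Φ 0 x = x) ∧
  (∀ t u : ℝ, ∀ x : ℝ, Φ (t + u) x = Φ t (Φ u x)) ∧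
  (∀ t : ℝ, ∀ x ∉ s, Φ t x = x) ∧
  (∀ t : ℝ, BijOn (Φ t) s s) ∧
  (∀ t : ℝ, ∀ x ∈ s, HasDerivWithinAt (Φ t) (Φ' t x) s x) ∧
  (∀ t : ℝ, ContinuousOn (Φ' t) s) ∧
  (∀ t : ℝ, ∀ x ∈ s, 0 < Φ' t x) ∧
  (∀ t₀ : ℝ, ∀ K : Set ℝ, IsCompact K → K ⊆ s → ∀ ε > (0:ℝ), ∃ δ > (0:ℝ), ∀ t : ℝ,
    |t - t₀| < δ → ∀ x ∈ K,
      |Φ t x - Φ t₀ x| + |Real.log (Φ' t x) - Real.log (Φ' t₀ x)| < ε)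

/-!
Commuting with `f`, the map `g` permutes the fixed points of `f` and preserves `Df` on them. So if
`g p ≠ p`, the `g`-orbit of `p` is a monotone sequence of fixed points of `f` at which `Df = Df(p)`,
and between two consecutive ones `Df` takes the value `1`: `log Df` would have infinite variation.

If `g p = p` and `Dg(p) = 1`, replace `f` by `f⁻¹` if needed, so that `f` contracts towards `p`,
and reflect `[0,1]` if needed, so that `g` is not the identity on any interval `(p, p + ε)`.
Either `g` has no fixed point on some `(p, x₀]`: then `g` (or `g⁻¹`) pushes `x₀` down to `p`, and
commutation transports an inequality `g^m x₀ < f x₀` along this orbit, whereas `g^m`, tangent to the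
identity at `p`, lies above `f` just to the right of `p`. Or there is a maximal interval `(α, β)`
without fixed points of `g` close to `p`, which `f` moves off itself: as in Kopell's lemma, the
variation of `log Df` on the disjoint intervals `fⁿ[α, β]` bounds the derivatives of all the `g^m`
on `[α, β]`, which is incompatible with `g^m` pushing the whole gap towards one of its ends.
-/

theorem BoundedVariationOn.sum_abs_sub_le {X : Type*} [LinearOrder X] {f : X → ℝ} {s : Set X}
    (hf : BoundedVariationOn f s) {c e : ℕ → X} (hc : ∀ k, c k ∈ s) (he : ∀ k, e k ∈ s)
    (hce : ∀ k, c k ≤ e k) (hec : ∀ k, e (k + 1) ≤ c k) (n : ℕ) :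
    ∑ k ∈ Finset.range n, |f (e k) - f (c k)| ≤ (eVariationOn f s).toReal := by
  -- `e 0 ≥ c 0 ≥ e 1 ≥ c 1 ≥ ⋯` is a monotone sequence for the reversed order
  let u : ℕ → Xᵒᵈ := fun j => OrderDual.toDual (if j % 2 = 0 then e (j / 2) else c (j / 2))
  have hu_even (k : ℕ) : u (2 * k) = OrderDual.toDual (e k) := by simp [u]
  have hu_odd (k : ℕ) : u (2 * k + 1) = OrderDual.toDual (c k) := by
    simp [u, Nat.add_mod, Nat.add_div]
  have hu : Monotone u := by
    refine monotone_nat_of_le_succ fun j => ?_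
    obtain ⟨k, rfl | rfl⟩ := Nat.even_or_odd' j
    · rw [hu_even, hu_odd]; exact hce k
    · rw [hu_odd, show 2 * k + 1 + 1 = 2 * (k + 1) by ring, hu_even]; exact hec k
  have hus (j : ℕ) : u j ∈ OrderDual.ofDual ⁻¹' s := by
    simp only [u, mem_preimage, OrderDual.ofDual_toDual]; split_ifs <;> simp [hc, he]
  have hpairs : ∑ k ∈ Finset.range n, edist (f (e k)) (f (c k))
      ≤ ∑ j ∈ Finset.range (2 * n), edist ((f ∘ OrderDual.ofDual) (u (j + 1)))
          ((f ∘ OrderDual.ofDual) (u j)) := by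
    induction n with
    | zero => simp
    | succ n ih =>
      rw [Finset.sum_range_succ, show 2 * (n + 1) = 2 * n + 1 + 1 by ring,
        Finset.sum_range_succ, Finset.sum_range_succ]
      refine le_add_right (add_le_add ih ?_)
      rw [hu_odd, hu_even, edist_comm]; rfl
  have hle := ENNReal.toReal_mono hf <|
    hpairs.trans ((eVariationOn.sum_le hu hus).trans_eq (eVariationOn.comp_ofDual f s))
  simpa [ENNReal.toReal_sum, edist_dist, Real.dist_eq] using hle

section OrderTopology

variable {X : Type*} [ConditionallyCompleteLinearOrder X] [TopologicalSpace X] [OrderTopology X]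

theorem tendsto_iterate_of_lt_self {φ : X → X} (hφ : Continuous φ) (hmono : StrictMono φ)
    {a v : X} (ha : φ a = a) (hav : a < v) (hlt : ∀ x ∈ Ioc a v, φ x < x) :
    (∀ n, φ^[n] v ∈ Ioc a v) ∧ Tendsto (fun n => φ^[n] v) atTop (𝓝 a) := by
  have hmaps : MapsTo φ (Ioc a v) (Ioc a v) := fun x hx =>
    ⟨ha ▸ hmono hx.1, (hlt x hx).le.trans hx.2⟩
  have hmem (n : ℕ) : φ^[n] v ∈ Ioc a v := hmaps.iterate n ⟨hav, le_rfl⟩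
  refine ⟨hmem, ?_⟩
  have hanti : Antitone fun n => φ^[n] v := antitone_nat_of_succ_le fun n => by
    rw [Function.iterate_succ_apply']; exact (hlt _ (hmem n)).le
  have hbdd : BddBelow (range fun n => φ^[n] v) :=
    ⟨a, by rintro _ ⟨n, rfl⟩; exact (hmem n).1.le⟩
  have htend := tendsto_atTop_ciInf hanti hbdd
  have hfix := isFixedPt_of_tendsto_iterate htend hφ.continuousAt
  obtain heq | hlt' := (le_ciInf fun n => (hmem n).1.le : a ≤ ⨅ n, φ^[n] v).eq_or_lt
  · rwa [← heq] at htend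
  · exact absurd hfix (hlt _ ⟨hlt', ciInf_le hbdd 0⟩).ne

theorem exists_fixedPoints_gap {φ : X → X} (hφ : Continuous φ) {z₁ u z₂ : X} (h₁ : z₁ ≤ u)
    (h₂ : u ≤ z₂) (hz₁ : φ z₁ = z₁) (hz₂ : φ z₂ = z₂) (hu : φ u ≠ u) :
    ∃ a b, z₁ ≤ a ∧ a < u ∧ u < b ∧ b ≤ z₂ ∧ φ a = a ∧ φ b = b ∧ ∀ x ∈ Ioo a b, φ x ≠ x := by
  have hclosed : IsClosed (Function.fixedPoints φ) := isClosed_eq hφ continuous_id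
  set S₁ := Function.fixedPoints φ ∩ Icc z₁ u
  set S₂ := Function.fixedPoints φ ∩ Icc u z₂
  have hS₁bdd : BddAbove S₁ := ⟨u, fun x hx => hx.2.2⟩
  have hS₂bdd : BddBelow S₂ := ⟨u, fun x hx => hx.2.1⟩
  have hS₁ : sSup S₁ ∈ S₁ :=
    (hclosed.inter isClosed_Icc).csSup_mem ⟨z₁, hz₁, le_rfl, h₁⟩ hS₁bdd
  have hS₂ : sInf S₂ ∈ S₂ :=
    (hclosed.inter isClosed_Icc).csInf_mem ⟨z₂, hz₂, h₂, le_rfl⟩ hS₂bdd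
  refine ⟨sSup S₁, sInf S₂, hS₁.2.1, hS₁.2.2.lt_of_ne fun h => hu (h ▸ hS₁.1),
    hS₂.2.1.lt_of_ne fun h => hu (h ▸ hS₂.1), hS₂.2.2, hS₁.1, hS₂.1, fun x hx hfix => ?_⟩
  rcases le_total x u with hxu | hux
  · exact (le_csSup hS₁bdd ⟨hfix, hS₁.2.1.trans hx.1.le, hxu⟩).not_gt hx.1
  · exact (csInf_le hS₂bdd ⟨hfix, hux, hx.2.le.trans hS₂.2.2⟩).not_gt hx.2

end OrderTopology

theorem HasDerivAt.eventually_nhdsGT_lt {f g : ℝ → ℝ} {f' g' x : ℝ} (hf : HasDerivAt f f' x)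
    (hg : HasDerivAt g g' x) (hfg : f x = g x) (h' : f' < g') : ∀ᶠ y in 𝓝[>] x, f y < g y := by
  have hslope := ((hg.sub hf).tendsto_slope.mono_left (nhdsGT_le_nhdsNE x)).eventually
    (eventually_gt_nhds (sub_pos.mpr h'))
  filter_upwards [hslope, self_mem_nhdsWithin] with y hy hxy
  rw [slope_def_field, Pi.sub_apply, Pi.sub_apply, hfg, sub_self, sub_zero] at hy
  exact sub_pos.mp ((div_pos_iff_of_pos_right (sub_pos.mpr hxy)).mp hy)

theorem bijOn_one_sub_Icc : BijOn (fun x : ℝ => 1 - x) (Icc 0 1) (Icc 0 1) := by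
  refine ⟨fun x hx => ?_, sub_right_injective.injOn, fun y hy => ⟨1 - y, ?_, sub_sub_cancel 1 y⟩⟩
  · exact ⟨sub_nonneg.mpr hx.2, sub_le_self 1 hx.1⟩
  · exact ⟨sub_nonneg.mpr hy.2, sub_le_self 1 hy.1⟩

namespace C1Diffeo

variable (F G : C1Diffeo)

theorem toFun_eq_self_of_notMem_Ioo {x : ℝ} (hx : x ∉ Ioo (0:ℝ) 1) : F.toFun x = x := by
  by_cases h : x ∈ Icc (0:ℝ) 1
  · obtain rfl | rfl : x = 0 ∨ x = 1 := by
      by_contra! hne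
      exact hx ⟨lt_of_le_of_ne h.1 hne.1.symm, lt_of_le_of_ne h.2 hne.2⟩
    exacts [F.map_zero, F.map_one]
  · exact F.fixes_outside x h

theorem continuousOn_Icc : ContinuousOn F.toFun (Icc 0 1) :=
  fun x hx => (F.hasDeriv x hx).continuousWithinAt

theorem continuous : Continuous F.toFun := by
  have hid : ContinuousOn F.toFun (Ioo 0 1)ᶜ :=
    continuousOn_id.congr fun x hx => F.toFun_eq_self_of_notMem_Ioo hx
  have hcover : Icc (0:ℝ) 1 ∪ (Ioo 0 1)ᶜ = univ :=
    eq_univ_of_forall fun x => (em (x ∈ Ioo (0:ℝ) 1)).imp (Ioo_subset_Icc_self ·) id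
  rw [← continuousOn_univ, ← hcover]
  exact F.continuousOn_Icc.union_of_isClosed hid isClosed_Icc isOpen_Ioo.isClosed_compl

theorem strictMonoOn_Icc : StrictMonoOn F.toFun (Icc 0 1) :=
  F.continuousOn_Icc.strictMonoOn_of_injOn_Icc zero_le_one
    (by rw [F.map_zero, F.map_one]; exact zero_le_one) F.bijOn.injOn

theorem strictMono : StrictMono F.toFun := by
  have hid : ∀ s ⊆ (Ioo (0:ℝ) 1)ᶜ, StrictMonoOn F.toFun s := fun s hs =>
    strictMonoOn_id.congr fun x hx => (F.toFun_eq_self_of_notMem_Ioo (hs hx)).symm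
  have hle : StrictMonoOn F.toFun (Iic 1) := by
    rw [← Iic_union_Icc_eq_Iic zero_le_one]
    exact (hid _ fun x hx h => h.1.not_ge hx).union F.strictMonoOn_Icc isGreatest_Iic
      (isLeast_Icc zero_le_one)
  rw [← strictMonoOn_univ, ← Iic_union_Ici (a := (1:ℝ))]
  exact hle.union (hid _ fun x hx h => h.2.not_ge hx) isGreatest_Iic isLeast_Ici

theorem mapsTo_Icc : MapsTo F.toFun (Icc 0 1) (Icc 0 1) := F.bijOn.mapsTo

theorem hasDerivAt {x : ℝ} (hx : x ∈ Ioo (0:ℝ) 1) : HasDerivAt F.toFun (F.derivFun x) x :=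
  (F.hasDeriv x (Ioo_subset_Icc_self hx)).hasDerivAt (Icc_mem_nhds hx.1 hx.2)

theorem exists_sub_eq_derivFun_mul {x y : ℝ} (hx : 0 ≤ x) (hxy : x < y) (hy : y ≤ 1) :
    ∃ ξ ∈ Ioo x y, F.toFun y - F.toFun x = F.derivFun ξ * (y - x) := by
  obtain ⟨ξ, hξ, hslope⟩ := exists_hasDerivAt_eq_slope F.toFun F.derivFun hxy
    F.continuous.continuousOn
    fun ξ hξ => F.hasDerivAt ⟨hx.trans_lt hξ.1, hξ.2.trans_le hy⟩
  exact ⟨ξ, hξ, by rw [hslope, div_mul_cancel₀ _ (sub_ne_zero.mpr hxy.ne')]⟩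

theorem derivFun_eq_of_hasDerivWithinAt {x d : ℝ} (hx : x ∈ Icc (0:ℝ) 1)
    (h : HasDerivWithinAt F.toFun d (Icc 0 1) x) : F.derivFun x = d :=
  (uniqueDiffOn_Icc zero_lt_one x hx).eq_deriv _ (F.hasDeriv x hx) h

theorem derivFun_congr (h : F.toFun = G.toFun) {x : ℝ} (hx : x ∈ Icc (0:ℝ) 1) :
    F.derivFun x = G.derivFun x :=
  F.derivFun_eq_of_hasDerivWithinAt hx (h ▸ G.hasDeriv x hx)

protected def id : C1Diffeo where
  toFun := id
  derivFun _ := 1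
  map_zero := rfl
  map_one := rfl
  fixes_outside _ _ := rfl
  bijOn := bijOn_id _
  hasDeriv x _ := hasDerivWithinAt_id x _
  derivFun_cont := continuousOn_const
  derivFun_pos _ _ := one_pos

def comp : C1Diffeo where
  toFun := F.toFun ∘ G.toFun
  derivFun x := F.derivFun (G.toFun x) * G.derivFun x
  map_zero := by simp [F.map_zero, G.map_zero]
  map_one := by simp [F.map_one, G.map_one]
  fixes_outside x hx := by simp [G.fixes_outside x hx, F.fixes_outside x hx]
  bijOn := F.bijOn.comp G.bijOn
  hasDeriv x hx := (F.hasDeriv _ (G.mapsTo_Icc hx)).comp x (G.hasDeriv x hx) G.mapsTo_Icc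
  derivFun_cont :=
    (F.derivFun_cont.comp G.continuousOn_Icc G.mapsTo_Icc).mul G.derivFun_cont
  derivFun_pos x hx := mul_pos (F.derivFun_pos _ (G.mapsTo_Icc hx)) (G.derivFun_pos x hx)

def iterate : ℕ → C1Diffeo
  | 0 => C1Diffeo.id
  | n + 1 => (iterate n).comp F

theorem iterate_toFun (n : ℕ) : (F.iterate n).toFun = F.toFun^[n] := by
  induction n with
  | zero => rfl
  | succ n ih => exact congrArg (· ∘ F.toFun) ih

theorem derivFun_iterate_eq_one {p : ℝ} (hfix : F.toFun p = p) (hD : F.derivFun p = 1)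
    (n : ℕ) : (F.iterate n).derivFun p = 1 := by
  induction n with
  | zero => rfl
  | succ n ih => simp only [iterate, comp, hfix, ih, hD, mul_one]

theorem log_derivFun_iterate {x : ℝ} (hx : x ∈ Icc (0:ℝ) 1) (n : ℕ) :
    Real.log ((F.iterate n).derivFun x)
      = ∑ k ∈ Finset.range n, Real.log (F.derivFun (F.toFun^[k] x)) := by
  induction n generalizing x with
  | zero => simp [iterate, C1Diffeo.id]
  | succ n ih =>
    rw [Finset.sum_range_succ', Function.iterate_zero_apply]
    simp only [iterate, comp, Function.iterate_succ_apply]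
    rw [Real.log_mul ((F.iterate n).derivFun_pos _ (F.mapsTo_Icc hx)).ne'
      (F.derivFun_pos x hx).ne', ih (F.mapsTo_Icc hx)]

theorem derivFun_mul_comm (h : Function.Commute F.toFun G.toFun) {x : ℝ}
    (hx : x ∈ Icc (0:ℝ) 1) :
    F.derivFun (G.toFun x) * G.derivFun x = G.derivFun (F.toFun x) * F.derivFun x :=
  (F.comp G).derivFun_congr (G.comp F) h.comp_eq hx

theorem derivFun_toFun_eq_of_commute (h : Function.Commute F.toFun G.toFun) {x : ℝ}
    (hx : x ∈ Icc (0:ℝ) 1) (hfix : F.toFun x = x) : F.derivFun (G.toFun x) = F.derivFun x := by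
  have := F.derivFun_mul_comm G h hx
  rw [hfix, mul_comm (G.derivFun x)] at this
  exact mul_right_cancel₀ (G.derivFun_pos x hx).ne' this

theorem derivFun_ne_one_of_commute_of_lt_self (h : Function.Commute F.toFun G.toFun)
    {p x₀ : ℝ} (hp : p ∈ Ioo (0:ℝ) 1) (hFp : F.toFun p = p) (hDF : F.derivFun p < 1)
    (hGp : G.toFun p = p) (hpx₀ : p < x₀) (hG : ∀ x ∈ Ioc p x₀, G.toFun x < x) :
    G.derivFun p ≠ 1 := by
  intro hDG
  obtain ⟨hmem, htend⟩ := tendsto_iterate_of_lt_self G.continuous G.strictMono hGp hpx₀ hG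
  obtain ⟨m, hm⟩ : ∃ m, G.toFun^[m] x₀ < F.toFun x₀ :=
    (htend.eventually (eventually_lt_nhds (hFp ▸ F.strictMono hpx₀))).exists
  -- `G^m` is tangent to the identity at `p`, so it lies above `F` just to the right of `p`
  have habove : ∀ᶠ y in 𝓝[>] p, F.toFun y < G.toFun^[m] y := by
    have := (F.hasDerivAt hp).eventually_nhdsGT_lt ((G.iterate m).hasDerivAt hp)
      (by rw [G.iterate_toFun, Function.iterate_fixed hGp, hFp])
      (by rwa [G.derivFun_iterate_eq_one hGp hDG])
    rwa [G.iterate_toFun] at this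
  -- but commutation carries `G^m x₀ < F x₀` along the `G`-orbit of `x₀`, which tends to `p`
  have hbelow (n : ℕ) : G.toFun^[m] (G.toFun^[n] x₀) < F.toFun (G.toFun^[n] x₀) := by
    rw [← Function.iterate_add_apply, add_comm, Function.iterate_add_apply,
      (h.iterate_right n).eq]
    exact G.strictMono.iterate n hm
  have htend' : Tendsto (fun n => G.toFun^[n] x₀) atTop (𝓝[>] p) :=
    tendsto_nhdsWithin_iff.mpr ⟨htend, Eventually.of_forall fun n => (hmem n).1⟩
  obtain ⟨n, hn⟩ := (htend'.eventually habove).exists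
  exact (hn.trans (hbelow n)).false

theorem exists_lt_derivFun_iterate {α β : ℝ} (hα : 0 ≤ α) (hαβ : α < β) (hβ : β ≤ 1)
    (hGα : G.toFun α = α) (hGβ : G.toFun β = β) (hG : ∀ x ∈ Ioo α β, G.toFun x < x) (C : ℝ) :
    ∃ m, ∃ x ∈ Ioo α β, C < (G.iterate m).derivFun x := by
  by_contra! hC
  have hnear : ∀ᶠ u in 𝓝[<] β, C * (β - u) < β - α :=
    ((Continuous.tendsto' (by fun_prop) β 0 (by simp)).mono_left nhdsWithin_le_nhds).eventually
      (eventually_lt_nhds (sub_pos.mpr hαβ))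
  obtain ⟨u, hCu, hu⟩ := (hnear.and (Ioo_mem_nhdsLT hαβ)).exists
  have hlim : Tendsto (fun m => β - G.toFun^[m] u) atTop (𝓝 (β - α)) :=
    (tendsto_iterate_of_lt_self G.continuous G.strictMono hGα hu.1
      fun x hx => hG x ⟨hx.1, hx.2.trans_lt hu.2⟩).2.const_sub β
  -- the iterates of `G` are uniformly Lipschitz on the gap, yet `G^m u → α` while `G^m β = β`
  have hbound (m : ℕ) : β - G.toFun^[m] u ≤ C * (β - u) := by
    obtain ⟨ξ, hξ, heq⟩ := (G.iterate m).exists_sub_eq_derivFun_mul (hα.trans hu.1.le) hu.2 hβ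
    rw [G.iterate_toFun, Function.iterate_fixed hGβ] at heq
    rw [heq]
    exact mul_le_mul_of_nonneg_right (hC m ξ ⟨hu.1.trans hξ.1, hξ.2⟩) (sub_pos.mpr hu.2).le
  exact (le_of_tendsto' hlim hbound).not_gt hCu

@[simps]
def reflect : C1Diffeo where
  toFun x := 1 - F.toFun (1 - x)
  derivFun x := F.derivFun (1 - x)
  map_zero := by simp [F.map_one]
  map_one := by simp [F.map_zero]
  fixes_outside x hx := by
    have h : 1 - x ∉ Icc (0:ℝ) 1 := fun h => hx (by simpa using bijOn_one_sub_Icc.mapsTo h)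
    rw [F.fixes_outside _ h, sub_sub_cancel]
  bijOn := bijOn_one_sub_Icc.comp (F.bijOn.comp bijOn_one_sub_Icc)
  hasDeriv x hx := by
    simpa using ((F.hasDeriv _ (bijOn_one_sub_Icc.mapsTo hx)).comp x
      ((hasDerivWithinAt_id x _).const_sub 1) bijOn_one_sub_Icc.mapsTo).const_sub 1
  derivFun_cont := F.derivFun_cont.comp (by fun_prop) bijOn_one_sub_Icc.mapsTo
  derivFun_pos x hx := F.derivFun_pos _ (bijOn_one_sub_Icc.mapsTo hx)

end C1Diffeo

namespace C1bvDiffeo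

variable (F : C1bvDiffeo) (G : C1Diffeo)

def varLogDeriv : ℝ := (eVariationOn (fun x => Real.log (F.derivFun x)) (Icc 0 1)).toReal

theorem le_toFun_of_commute (h : Function.Commute F.toFun G.toFun) {p : ℝ}
    (hp : p ∈ Icc (0:ℝ) 1) (hfix : F.toFun p = p) (hhyp : F.derivFun p ≠ 1) :
    p ≤ G.toFun p := by
  by_contra! hGp
  set x : ℕ → ℝ := fun n => G.toFun^[n] p
  have hx (n : ℕ) : x n ∈ Icc (0:ℝ) 1 := G.mapsTo_Icc.iterate n hp
  have hdec (n : ℕ) : x (n + 1) < x n := by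
    simp only [x, Function.iterate_succ_apply]
    exact (G.strictMono.iterate n) hGp
  have hFx (n : ℕ) : F.toFun (x n) = x n := by
    simp only [x]; rw [(h.iterate_right n).eq, hfix]
  have hDx (n : ℕ) : F.derivFun (x n) = F.derivFun p := by
    induction n with
    | zero => rfl
    | succ n ih =>
      simp only [x, Function.iterate_succ_apply'] at ih ⊢
      rw [F.derivFun_toFun_eq_of_commute G h (hx n) (hFx n), ih]
  have hξ (n : ℕ) : ∃ ξ ∈ Ioo (x (n + 1)) (x n), F.derivFun ξ = 1 := by
    obtain ⟨ξ, hξ, heq⟩ := F.exists_sub_eq_derivFun_mul (hx _).1 (hdec n) (hx n).2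
    rw [hFx, hFx] at heq
    exact ⟨ξ, hξ, (mul_eq_right₀ (sub_ne_zero.mpr (hdec n).ne')).mp heq.symm⟩
  choose ξ hξ hξ1 using hξ
  have hsum := F.logDeriv_bv.sum_abs_sub_le
    (fun k => ⟨(hx (k + 1)).1.trans (hξ k).1.le, (hξ k).2.le.trans (hx k).2⟩) hx
    (fun k => (hξ k).2.le) (fun k => (hξ k).1.le)
  have hlog : 0 < |Real.log (F.derivFun p)| := abs_pos.mpr <|
    Real.log_ne_zero_of_pos_of_ne_one (F.derivFun_pos p hp) hhyp
  obtain ⟨n, hn⟩ := exists_nat_gt (F.varLogDeriv / |Real.log (F.derivFun p)|)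
  specialize hsum n
  simp only [hDx, hξ1, Real.log_one, sub_zero, Finset.sum_const, Finset.card_range,
    nsmul_eq_mul] at hsum
  rw [div_lt_iff₀ hlog] at hn
  exact (hn.trans_le hsum).false

theorem abs_log_derivFun_iterate_sub_le {α β : ℝ} (hα : 0 ≤ α) (hβ : β ≤ 1)
    (hFβ : F.toFun β ≤ α) {u w : ℝ} (hu : u ∈ Icc α β) (hw : w ∈ Icc α β) (n : ℕ) :
    |Real.log ((F.iterate n).derivFun w) - Real.log ((F.iterate n).derivFun u)|
      ≤ F.varLogDeriv := by
  wlog huw : u ≤ w generalizing u w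
  · rw [abs_sub_comm]; exact this hw hu (le_of_not_ge huw)
  have hsub : Icc α β ⊆ Icc 0 1 := Icc_subset_Icc hα hβ
  rw [F.log_derivFun_iterate (hsub hw), F.log_derivFun_iterate (hsub hu),
    ← Finset.sum_sub_distrib]
  -- the intervals `F^k [u, w]` are disjoint since `F` maps `[α, β]` below `α`
  refine (Finset.abs_sum_le_sum_abs _ _).trans <| F.logDeriv_bv.sum_abs_sub_le
    (c := fun k => F.toFun^[k] u) (e := fun k => F.toFun^[k] w)
    (fun k => F.mapsTo_Icc.iterate k (hsub hu)) (fun k => F.mapsTo_Icc.iterate k (hsub hw))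
    (fun k => (F.strictMono.iterate k).monotone huw) (fun k => ?_) n
  rw [Function.iterate_succ_apply]
  exact (F.strictMono.iterate k).monotone <|
    ((F.strictMono.monotone hw.2).trans hFβ).trans hu.1

theorem derivFun_iterate_le_of_commute (h : Function.Commute F.toFun G.toFun)
    {p α β u : ℝ} (hp : p ∈ Icc (0:ℝ) 1) (hGp : G.toFun p = p) (hDG : G.derivFun p = 1)
    (hα : 0 ≤ α) (hβ : β ≤ 1) (hFβ : F.toFun β ≤ α) (hGα : G.toFun α = α)
    (hGβ : G.toFun β = β) (hu : u ∈ Icc α β)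
    (htend : Tendsto (fun n => F.toFun^[n] u) atTop (𝓝 p)) (m : ℕ) :
    (G.iterate m).derivFun u ≤ Real.exp F.varLogDeriv := by
  have hsub : Icc α β ⊆ Icc 0 1 := Icc_subset_Icc hα hβ
  have hGmu : G.toFun^[m] u ∈ Icc α β := by
    have hmono := (G.strictMono.iterate m).monotone
    exact ⟨Function.iterate_fixed hGα m ▸ hmono hu.1, Function.iterate_fixed hGβ m ▸ hmono hu.2⟩
  have hpos {k : ℕ} {H : C1Diffeo} {x : ℝ} (hx : x ∈ Icc (0:ℝ) 1) :
      0 < (H.iterate k).derivFun x := (H.iterate k).derivFun_pos x hx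
  have hkey (n : ℕ) : Real.log ((G.iterate m).derivFun u)
      ≤ Real.log ((G.iterate m).derivFun (F.toFun^[n] u)) + F.varLogDeriv := by
    have hcomm := (F.iterate n).derivFun_mul_comm (G.iterate m)
      (by rw [F.iterate_toFun, G.iterate_toFun]; exact h.iterate_iterate n m) (hsub hu)
    rw [F.iterate_toFun, G.iterate_toFun] at hcomm
    have hlog := congrArg Real.log hcomm
    rw [Real.log_mul (hpos (hsub hGmu)).ne' (hpos (hsub hu)).ne',
      Real.log_mul (hpos (F.mapsTo_Icc.iterate n (hsub hu))).ne' (hpos (hsub hu)).ne'] at hlog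
    linarith [(abs_le.mp (F.abs_log_derivFun_iterate_sub_le hα hβ hFβ hu hGmu n)).1]
  have hlim : Tendsto (fun n => Real.log ((G.iterate m).derivFun (F.toFun^[n] u))
      + F.varLogDeriv) atTop (𝓝 (Real.log 1 + F.varLogDeriv)) := by
    refine ((Real.continuousAt_log one_ne_zero).tendsto.comp ?_).add_const _
    rw [← G.derivFun_iterate_eq_one hGp hDG m]
    exact ((G.iterate m).derivFun_cont p hp).tendsto.comp <| tendsto_nhdsWithin_iff.mpr
      ⟨htend, Eventually.of_forall fun n => F.mapsTo_Icc.iterate n (hsub hu)⟩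
  rw [← Real.log_le_iff_le_exp (hpos (hsub hu))]
  simpa using ge_of_tendsto' hlim hkey

theorem derivFun_ne_one_of_commute_of_gap (h : Function.Commute F.toFun G.toFun)
    {p α β : ℝ} (hp : p ∈ Icc (0:ℝ) 1) (hFp : F.toFun p = p) (hF : ∀ x ∈ Ioc p β, F.toFun x < x)
    (hGp : G.toFun p = p) (hpα : p < α) (hαβ : α < β) (hβ : β ≤ 1) (hGα : G.toFun α = α)
    (hGβ : G.toFun β = β) (hG : ∀ x ∈ Ioo α β, G.toFun x < x) : G.derivFun p ≠ 1 := by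
  intro hDG
  have hFβ : F.toFun β ≤ α := by
    by_contra! hαFβ
    have hfix : G.toFun (F.toFun β) = F.toFun β := by rw [← h.eq, hGβ]
    exact (hG _ ⟨hαFβ, hF β ⟨hpα.trans hαβ, le_rfl⟩⟩).ne hfix
  obtain ⟨m, x, hx, hlt⟩ := G.exists_lt_derivFun_iterate (hp.1.trans hpα.le) hαβ hβ hGα hGβ hG
    (Real.exp F.varLogDeriv)
  refine hlt.not_ge <| F.derivFun_iterate_le_of_commute G h hp hGp hDG (hp.1.trans hpα.le) hβ
    hFβ hGα hGβ (Ioo_subset_Icc_self hx) ?_ m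
  exact (tendsto_iterate_of_lt_self F.continuous F.strictMono hFp (hpα.trans hx.1)
    fun y hy => hF y ⟨hy.1, hy.2.trans hx.2.le⟩).2

@[simps!]
def reflect : C1bvDiffeo where
  toC1Diffeo := F.toC1Diffeo.reflect
  logDeriv_bv := by
    have hanti : AntitoneOn (fun x : ℝ => 1 - x) (Icc 0 1) :=
      fun x _ y _ hxy => sub_le_sub_left hxy 1
    change eVariationOn ((fun x => Real.log (F.derivFun x)) ∘ fun x => 1 - x) (Icc 0 1) ≠ ⊤
    rw [eVariationOn.comp_eq_of_antitoneOn _ _ hanti, bijOn_one_sub_Icc.image_eq]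
    exact F.logDeriv_bv

end C1bvDiffeo

namespace ZdAction1bv

variable {d : ℕ} (ρ : ZdAction1bv d)

theorem commute (a b : Fin d → ℤ) : Function.Commute (ρ.elt a).toFun (ρ.elt b).toFun :=
  fun x => by rw [← ρ.elt_add, ← ρ.elt_add, add_comm]

theorem toFun_neg_apply (b : Fin d → ℤ) (x : ℝ) :
    (ρ.elt (-b)).toFun ((ρ.elt b).toFun x) = x := by
  rw [← ρ.elt_add, neg_add_cancel, ρ.elt_zero]

theorem derivFun_neg_mul (b : Fin d → ℤ) {x : ℝ} (hx : x ∈ Icc (0:ℝ) 1) :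
    (ρ.elt (-b)).derivFun ((ρ.elt b).toFun x) * (ρ.elt b).derivFun x = 1 :=
  ((ρ.elt (-b)).comp (ρ.elt b).toC1Diffeo).derivFun_congr C1Diffeo.id
    (funext (ρ.toFun_neg_apply b)) hx

theorem toFun_eq_self_of_mem_pair {b c : Fin d → ℤ} (hc : c ∈ ({b, -b} : Set (Fin d → ℤ)))
    {x : ℝ} (hx : (ρ.elt b).toFun x = x) : (ρ.elt c).toFun x = x := by
  rcases hc with rfl | rfl
  · exact hx
  · nth_rewrite 1 [← hx]
    exact ρ.toFun_neg_apply b x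

theorem derivFun_eq_one_of_mem_pair {b c : Fin d → ℤ} (hc : c ∈ ({b, -b} : Set (Fin d → ℤ)))
    {x : ℝ} (hx : x ∈ Icc (0:ℝ) 1) (hfix : (ρ.elt b).toFun x = x)
    (hD : (ρ.elt b).derivFun x = 1) : (ρ.elt c).derivFun x = 1 := by
  rcases hc with rfl | rfl
  · exact hD
  · simpa [hfix, hD] using ρ.derivFun_neg_mul b hx

theorem exists_lt_self_of_ne_self (b : Fin d → ℤ) {s : Set ℝ} (hs : IsPreconnected s)
    (h : ∀ x ∈ s, (ρ.elt b).toFun x ≠ x) :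
    ∃ c ∈ ({b, -b} : Set (Fin d → ℤ)), ∀ x ∈ s, (ρ.elt c).toFun x < x := by
  rcases hs.mapsTo_Ioi_or_Iio ((ρ.elt b).continuous.sub continuous_id).continuousOn
    (fun x hx => sub_ne_zero.mpr (h x hx)) with hgt | hlt
  · refine ⟨-b, Or.inr rfl, fun x hx => ?_⟩
    have := (ρ.elt (-b)).strictMono (sub_pos.mp (hgt hx))
    rwa [ρ.toFun_neg_apply] at this
  · exact ⟨b, Or.inl rfl, fun x hx => sub_neg.mp (hlt hx)⟩

theorem exists_derivFun_lt_one {a : Fin d → ℤ} {p : ℝ} (hp : p ∈ Icc (0:ℝ) 1)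
    (hfix : (ρ.elt a).toFun p = p) (hhyp : (ρ.elt a).derivFun p ≠ 1) :
    ∃ c ∈ ({a, -a} : Set (Fin d → ℤ)), (ρ.elt c).derivFun p < 1 := by
  rcases hhyp.lt_or_gt with hlt | hgt
  · exact ⟨a, Or.inl rfl, hlt⟩
  · refine ⟨-a, Or.inr rfl, ?_⟩
    have := ρ.derivFun_neg_mul a hp
    rw [hfix] at this
    nlinarith [(ρ.elt (-a)).derivFun_pos p hp]

theorem toFun_eq_self_of_hyperbolic {a : Fin d → ℤ} {p : ℝ} (hp : p ∈ Icc (0:ℝ) 1)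
    (hfix : (ρ.elt a).toFun p = p) (hhyp : (ρ.elt a).derivFun p ≠ 1) (b : Fin d → ℤ) :
    (ρ.elt b).toFun p = p := by
  by_contra hne
  obtain ⟨c, -, hc⟩ := ρ.exists_lt_self_of_ne_self b isPreconnected_singleton (by simpa)
  exact (hc p rfl).not_ge <|
    (ρ.elt a).le_toFun_of_commute (ρ.elt c).toC1Diffeo (ρ.commute a c) hp hfix hhyp

theorem derivFun_ne_one_of_frequently_ne_right {a b : Fin d → ℤ} {p : ℝ}
    (hp : p ∈ Ioo (0:ℝ) 1) (hfix : (ρ.elt a).toFun p = p) (hhyp : (ρ.elt a).derivFun p ≠ 1)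
    (hgp : (ρ.elt b).toFun p = p) (hmoved : ∃ᶠ x in 𝓝[>] p, (ρ.elt b).toFun x ≠ x) :
    (ρ.elt b).derivFun p ≠ 1 := by
  intro hDg
  have hp' : p ∈ Icc (0:ℝ) 1 := Ioo_subset_Icc_self hp
  obtain ⟨a', ha', hlt⟩ := ρ.exists_derivFun_lt_one hp' hfix hhyp
  have hfix' := ρ.toFun_eq_self_of_mem_pair ha' hfix
  set F := ρ.elt a'
  obtain ⟨x₀, hpx₀, hx₀, hF⟩ : ∃ x₀, p < x₀ ∧ x₀ ≤ 1 ∧ ∀ x ∈ Ioc p x₀, F.toFun x < x := by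
    obtain ⟨x₁, hpx₁, hsub⟩ := mem_nhdsGT_iff_exists_Ioo_subset.mp
      (((F.hasDerivAt hp).eventually_nhdsGT_lt (hasDerivAt_id p) hfix' hlt).and
        (Ioo_mem_nhdsGT hp.2))
    have hpx₁ : p < x₁ := hpx₁
    exact ⟨(p + x₁) / 2, by linarith, (hsub ⟨by linarith, by linarith⟩).2.2.le,
      fun x hx => (hsub ⟨hx.1, by linarith [hx.2]⟩).1⟩
  by_cases hz : ∃ z ∈ Ioc p x₀, (ρ.elt b).toFun z = z
  · -- the `F`-orbit of `z` consists of fixed points of `ρ.elt b` accumulating at `p`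
    obtain ⟨z, hz, hgz⟩ := hz
    obtain ⟨hFz, hFz_tend⟩ := tendsto_iterate_of_lt_self F.continuous F.strictMono hfix' hz.1
      fun x hx => hF x ⟨hx.1, hx.2.trans hz.2⟩
    obtain ⟨u, hgu, hu⟩ := (hmoved.and_eventually (Ioo_mem_nhdsGT hz.1)).exists
    obtain ⟨n, hn⟩ := (hFz_tend.eventually (eventually_lt_nhds hu.1)).exists
    have hgz' : (ρ.elt b).toFun (F.toFun^[n] z) = F.toFun^[n] z := by
      rw [← ((ρ.commute a' b).iterate_left n).eq, hgz]
    obtain ⟨α, β, hα, hαu, huβ, hβ, hgα, hgβ, hgap⟩ :=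
      exists_fixedPoints_gap (ρ.elt b).continuous hn.le hu.2.le hgz' hgz hgu
    obtain ⟨c, hc, hclt⟩ := ρ.exists_lt_self_of_ne_self b isPreconnected_Ioo hgap
    exact F.derivFun_ne_one_of_commute_of_gap (ρ.elt c).toC1Diffeo (ρ.commute a' c) hp' hfix'
      (fun x hx => hF x ⟨hx.1, hx.2.trans (hβ.trans hz.2)⟩)
      (ρ.toFun_eq_self_of_mem_pair hc hgp) ((hFz n).1.trans_le hα) (hαu.trans huβ)
      (hβ.trans (hz.2.trans hx₀)) (ρ.toFun_eq_self_of_mem_pair hc hgα)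
      (ρ.toFun_eq_self_of_mem_pair hc hgβ) hclt (ρ.derivFun_eq_one_of_mem_pair hc hp' hgp hDg)
  · push Not at hz
    obtain ⟨c, hc, hclt⟩ := ρ.exists_lt_self_of_ne_self b isPreconnected_Ioc hz
    exact F.derivFun_ne_one_of_commute_of_lt_self (ρ.elt c).toC1Diffeo (ρ.commute a' c) hp hfix'
      hlt (ρ.toFun_eq_self_of_mem_pair hc hgp) hpx₀ hclt
      (ρ.derivFun_eq_one_of_mem_pair hc hp' hgp hDg)

@[simps]
def reflect : ZdAction1bv d where
  elt v := (ρ.elt v).reflect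
  elt_add a b x := by simp [ρ.elt_add]
  elt_zero x := by simp [ρ.elt_zero]

theorem derivFun_ne_one_of_frequently_ne_left {a b : Fin d → ℤ} {p : ℝ}
    (hp : p ∈ Ioo (0:ℝ) 1) (hfix : (ρ.elt a).toFun p = p) (hhyp : (ρ.elt a).derivFun p ≠ 1)
    (hgp : (ρ.elt b).toFun p = p) (hmoved : ∃ᶠ x in 𝓝[<] p, (ρ.elt b).toFun x ≠ x) :
    (ρ.elt b).derivFun p ≠ 1 := by
  have hreflect : Tendsto (fun x : ℝ => 1 - x) (𝓝[<] p) (𝓝[>] (1 - p)) :=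
    tendsto_nhdsWithin_of_tendsto_nhds_of_eventually_within _
      ((continuous_sub_left 1).tendsto p |>.mono_left nhdsWithin_le_nhds)
      (eventually_nhdsWithin_of_forall fun x (hx : x < p) => show 1 - p < 1 - x by linarith)
  simpa using ρ.reflect.derivFun_ne_one_of_frequently_ne_right (a := a) (b := b)
    ⟨sub_pos.mpr hp.2, sub_lt_self 1 hp.1⟩ (by simp [hfix]) (by simpa using hhyp)
    (by simp [hgp]) (hreflect.frequently (by simpa using hmoved))

end ZdAction1bv

/-- If some element of (the image group of) a `C^{1+bv}` action of `ℤᵈ` on `[0,1]` has a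
hyperbolic fixed point `p ∈ (0,1)`, then every element of the image group that does not
coincide with the identity on any neighborhood of `p` fixes `p` hyperbolically. -/
theorem hyperbolic_interior_fixed_point (d : ℕ) (ρ : ZdAction1bv d) (a : Fin d → ℤ) (p : ℝ)
    (hp : p ∈ Ioo (0:ℝ) 1) (hfix : (ρ.elt a).toFun p = p)
    (hhyp : (ρ.elt a).derivFun p ≠ 1) :
    ∀ b : Fin d → ℤ,
      (¬ ∃ ε > (0:ℝ), ∀ x : ℝ, |x - p| < ε → (ρ.elt b).toFun x = x) →
      (ρ.elt b).toFun p = p ∧ (ρ.elt b).derivFun p ≠ 1 := by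
  intro b hb
  have hgp := ρ.toFun_eq_self_of_hyperbolic (Ioo_subset_Icc_self hp) hfix hhyp b
  refine ⟨hgp, ?_⟩
  have hmoved : ∃ᶠ x in 𝓝[≠] p, (ρ.elt b).toFun x ≠ x := fun hev => hb <| by
    obtain ⟨ε, hε, h⟩ := Metric.eventually_nhds_iff.mp (eventually_nhdsWithin_iff.mp hev)
    refine ⟨ε, hε, fun x hx => ?_⟩
    rcases eq_or_ne x p with rfl | hxp
    exacts [hgp, not_not.mp (h (by rwa [Real.dist_eq]) hxp)]
  rw [← nhdsLT_sup_nhdsGT, frequently_sup] at hmoved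
  rcases hmoved with hleft | hright
  · exact ρ.derivFun_ne_one_of_frequently_ne_left hp hfix hhyp hgp hleft
  · exact ρ.derivFun_ne_one_of_frequently_ne_right hp hfix hhyp hgp hright
end
end

section
/- Let (f^t) be a C^1 flow of diffeomorphisms of [0,1] whose time-1 map f = f^1 is of class C^r, where r ∈ {1, 1+bv, 1+ac}. Then there is an orientation-preserving C^1 diffeomorphism φ of [0,1] conjugating the flow (f^t) to the flow of a C^r vector field X̃ on [0,1] which satisfies var(DX̃) = var(log Df). -/
/-!
Write `L(t,x) = log Df^t(x)` and `u(x) = ∫₀¹ L(σ,x) dσ`. Averaging the cocycle relation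
`L(t+σ,x) = L(σ,f^t x) + L(t,x)` over `σ ∈ [0,1]` gives
`u(f^t x) + L(t,x) = ∫ₜ^{t+1} L(σ,x) dσ`. Hence, in the coordinate `G(x) = c⁻¹ ∫₀ˣ e^u`
(normalised so that `G(1) = 1`), the time-`t` map reads
`G(f^t x) = c⁻¹ ∫₀ˣ exp (∫ₜ^{t+1} L(σ,z) dσ) dz`. This is differentiable in `t`, although the
flow itself is only assumed continuous in `t`, and its velocity at `t = 0` is
`X(G x) = ∫₀ˣ G'(z) L(1,z) dz`. Thus `DX = log Df ∘ G⁻¹`: the total variation is preserved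
because `G⁻¹` is an increasing homeomorphism of `[0,1]`, and absolute continuity because `G⁻¹`
is `C¹`.
-/

open Set MeasureTheory Filter Topology

noncomputable section

open Function

theorem continuousOn_uncurry_of_tendstoUniformlyOn {α β γ : Type*} [TopologicalSpace α]
    [TopologicalSpace β] [UniformSpace γ] {f : α → β → γ} {s : Set β}
    (hcont : ∀ t, ContinuousOn (f t) s) (hunif : ∀ t, TendstoUniformlyOn f (f t) (𝓝 t) s) :
    ContinuousOn (uncurry f) (univ ×ˢ s) := by
  rintro ⟨t, x⟩ ⟨-, hx⟩
  have hfst : Tendsto Prod.fst (𝓝[univ ×ˢ s] (t, x)) (𝓝 t) :=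
    continuous_fst.continuousWithinAt.tendsto
  have hsnd : Tendsto Prod.snd (𝓝[univ ×ˢ s] (t, x)) (𝓝[s] x) :=
    tendsto_nhdsWithin_iff.2 ⟨continuous_snd.continuousWithinAt.tendsto,
      eventually_mem_nhdsWithin.mono fun p hp => hp.2⟩
  exact TendstoUniformlyOn.tendsto_comp (F := fun p : α × β => f p.1)
    (fun u hu => hfst (hunif t u hu)) (hcont t x hx) hsnd

theorem tendstoUniformlyOn_of_continuousOn_uncurry {α β γ : Type*} [UniformSpace α]
    [WeaklyLocallyCompactSpace α] [UniformSpace β] [UniformSpace γ] {f : α → β → γ}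
    {s : Set β} (hs : IsCompact s) (hf : ContinuousOn (uncurry f) (univ ×ˢ s)) (t : α) :
    TendstoUniformlyOn f (f t) (𝓝 t) s := by
  obtain ⟨U, hU, hUt⟩ := exists_compact_mem_nhds t
  have := ((hU.prod hs).uniformContinuousOn_of_continuous
    (hf.mono (prod_mono (subset_univ _) subset_rfl))).tendstoUniformlyOn (mem_of_mem_nhds hUt)
  rwa [nhdsWithin_eq_nhds.2 hUt] at this

theorem ContinuousOn.uncurry_comp_right {α β γ : Type*} [TopologicalSpace α]
    [TopologicalSpace β] [TopologicalSpace γ] {f : α → β → γ} {g : β → β} {s : Set β}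
    (hf : ContinuousOn (uncurry f) (univ ×ˢ s)) (hg : ContinuousOn g s) (hgs : MapsTo g s s) :
    ContinuousOn (uncurry fun t y => f t (g y)) (univ ×ˢ s) :=
  hf.comp (continuousOn_fst.prodMk (hg.comp continuousOn_snd fun _ hp => hp.2))
    fun _ hp => ⟨trivial, hgs hp.2⟩

theorem surjective_of_hasDerivAt_of_le {f f' : ℝ → ℝ} {m : ℝ} (hm : 0 < m)
    (hf : ∀ x, HasDerivAt f (f' x) x) (hf' : ∀ x, m ≤ f' x) : Surjective f := by
  have hdiff : Differentiable ℝ f := fun x => (hf x).differentiableAt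
  have hgrowth := mul_sub_le_image_sub_of_le_deriv hdiff fun x => (hf x).deriv ▸ hf' x
  refine hdiff.continuous.surjective ?_ ?_
  · refine tendsto_atTop_mono' _ ?_ (tendsto_atTop_add_const_left _ (f 0)
      (tendsto_id.const_mul_atTop hm))
    filter_upwards [eventually_ge_atTop 0] with x hx
    have := hgrowth hx
    simp only [id, sub_zero] at this ⊢
    linarith
  · refine tendsto_atBot_mono' _ ?_ (tendsto_atBot_add_const_left _ (f 0)
      (tendsto_id.const_mul_atBot hm))
    filter_upwards [eventually_le_atBot 0] with x hx
    have := hgrowth hx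
    simp only [id, zero_sub] at this ⊢
    linarith

theorem hasDerivAt_integral_of_continuous_deriv {F F' : ℝ → ℝ → ℝ}
    (hF : ∀ τ, Continuous (F τ)) (hF' : Continuous (uncurry F'))
    (hd : ∀ τ z, HasDerivAt (F · z) (F' τ z) τ) (a b τ₀ : ℝ) :
    HasDerivAt (fun τ => ∫ z in a..b, F τ z) (∫ z in a..b, F' τ₀ z) τ₀ := by
  obtain ⟨M, hM⟩ := ((isCompact_closedBall τ₀ 1).prod (isCompact_uIcc (a := a) (b := b)))
    |>.exists_bound_of_continuousOn hF'.continuousOn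
  refine (intervalIntegral.hasDerivAt_integral_of_dominated_loc_of_deriv_le (bound := fun _ => M)
    (Metric.closedBall_mem_nhds τ₀ one_pos) (Eventually.of_forall fun τ =>
      (hF τ).aestronglyMeasurable) ((hF τ₀).intervalIntegrable a b)
    (hF'.comp (Continuous.prodMk_right τ₀)).aestronglyMeasurable ?_ intervalIntegrable_const
    (ae_of_all _ fun z _ τ _ => hd τ z)).2
  exact ae_of_all _ fun z hz τ hτ => hM (τ, z) ⟨hτ, uIoc_subset_uIcc hz⟩

theorem hasDerivAt_integral_self_add {f : ℝ → ℝ} (hf : Continuous f) (c τ : ℝ) :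
    HasDerivAt (fun t => ∫ σ in t..t + c, f σ) (f (τ + c) - f τ) τ := by
  have hprim (b : ℝ) := (hf.integral_hasStrictDerivAt 0 b).hasDerivAt
  have hsplit : (fun t => ∫ σ in t..t + c, f σ) =
      fun t => (∫ σ in (0:ℝ)..t + c, f σ) - ∫ σ in (0:ℝ)..t, f σ := by
    ext t
    rw [intervalIntegral.integral_interval_sub_left (hf.intervalIntegrable _ _)
      (hf.intervalIntegrable _ _)]
  rw [hsplit]
  exact ((hprim (τ + c)).comp_add_const τ c).sub (hprim τ)

theorem OrderIso.exists_integral_repr_comp {e : ℝ ≃o ℝ} {e' f h : ℝ → ℝ} {a b : ℝ}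
    (he : ∀ x, HasDerivAt e (e' x) x) (ha : e a = a) (hb : e b = b)
    (hh : IntegrableOn h (Icc a b)) (hf : ∀ x ∈ Icc a b, f x = f a + ∫ s in a..x, h s) :
    ∃ h' : ℝ → ℝ, IntegrableOn h' (Icc a b) ∧
      ∀ y ∈ Icc a b, f (e y) = f (e a) + ∫ s in a..y, h' s := by
  have hderiv (s : Set ℝ) : ∀ x ∈ s, HasDerivWithinAt e (e' x) s x :=
    fun x _ => (he x).hasDerivWithinAt
  refine ⟨fun s => e' s • h (e s), ?_, fun y hy => ?_⟩
  · refine (integrableOn_image_iff_integrableOn_deriv_smul_of_monotoneOn measurableSet_Icc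
      (hderiv _) (e.monotone.monotoneOn _) h).1 ?_
    rwa [e.image_Icc, ha, hb]
  · have hey : e y ∈ Icc a b := by
      rw [← ha, ← hb]; exact ⟨e.monotone hy.1, e.monotone hy.2⟩
    rw [hf _ hey, ha, intervalIntegral.integral_of_le hey.1, intervalIntegral.integral_of_le hy.1,
      ← integral_Icc_eq_integral_Ioc, ← integral_Icc_eq_integral_Ioc,
      ← integral_image_eq_integral_deriv_smul_of_monotoneOn measurableSet_Icc (hderiv _)
        (e.monotone.monotoneOn _), e.image_Icc, ha]

namespace IsC1FlowOn

variable {s : Set ℝ} {Φ Φ' : ℝ → ℝ → ℝ}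

theorem of_continuousOn (h0 : ∀ x, Φ 0 x = x)
    (hadd : ∀ t u x, Φ (t + u) x = Φ t (Φ u x)) (hout : ∀ t, ∀ x ∉ s, Φ t x = x)
    (hbij : ∀ t, BijOn (Φ t) s s)
    (hderiv : ∀ t, ∀ x ∈ s, HasDerivWithinAt (Φ t) (Φ' t x) s x)
    (hderiv_cont : ∀ t, ContinuousOn (Φ' t) s) (hpos : ∀ t, ∀ x ∈ s, 0 < Φ' t x)
    (hcont : ContinuousOn (uncurry Φ) (univ ×ˢ s))
    (hcont_log : ContinuousOn (uncurry fun t x => Real.log (Φ' t x)) (univ ×ˢ s)) :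
    IsC1FlowOn s Φ Φ' := by
  refine ⟨h0, hadd, hout, hbij, hderiv, hderiv_cont, hpos, fun t₀ K hK hKs ε hε => ?_⟩
  have hunif := Metric.tendstoUniformlyOn_iff.1 (tendstoUniformlyOn_of_continuousOn_uncurry hK
    (hcont.mono (prod_mono subset_rfl hKs)) t₀) (ε / 2) (half_pos hε)
  have hunif_log := Metric.tendstoUniformlyOn_iff.1 (tendstoUniformlyOn_of_continuousOn_uncurry hK
    (hcont_log.mono (prod_mono subset_rfl hKs)) t₀) (ε / 2) (half_pos hε)
  obtain ⟨δ, hδ, h⟩ := Metric.eventually_nhds_iff.1 (hunif.and hunif_log)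
  refine ⟨δ, hδ, fun t ht x hx => ?_⟩
  have h₁ := (h ht).1 x hx
  have h₂ := (h ht).2 x hx
  rw [Real.dist_eq, abs_sub_comm] at h₁ h₂
  linarith

theorem zero_apply (hΦ : IsC1FlowOn s Φ Φ') (x : ℝ) : Φ 0 x = x := hΦ.1 x

theorem add_apply (hΦ : IsC1FlowOn s Φ Φ') (t u x : ℝ) : Φ (t + u) x = Φ t (Φ u x) :=
  hΦ.2.1 t u x

theorem apply_of_notMem (hΦ : IsC1FlowOn s Φ Φ') (t : ℝ) {x : ℝ} (hx : x ∉ s) :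
    Φ t x = x :=
  hΦ.2.2.1 t x hx

theorem bijOn (hΦ : IsC1FlowOn s Φ Φ') (t : ℝ) : BijOn (Φ t) s s := hΦ.2.2.2.1 t

theorem mapsTo (hΦ : IsC1FlowOn s Φ Φ') (t : ℝ) : MapsTo (Φ t) s s := (hΦ.bijOn t).mapsTo

theorem hasDerivWithinAt (hΦ : IsC1FlowOn s Φ Φ') (t : ℝ) {x : ℝ} (hx : x ∈ s) :
    HasDerivWithinAt (Φ t) (Φ' t x) s x :=
  hΦ.2.2.2.2.1 t x hx

theorem continuousOn (hΦ : IsC1FlowOn s Φ Φ') (t : ℝ) : ContinuousOn (Φ t) s :=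
  fun _ hx => (hΦ.hasDerivWithinAt t hx).continuousWithinAt

theorem continuousOn_deriv (hΦ : IsC1FlowOn s Φ Φ') (t : ℝ) : ContinuousOn (Φ' t) s :=
  hΦ.2.2.2.2.2.1 t

theorem deriv_pos (hΦ : IsC1FlowOn s Φ Φ') (t : ℝ) {x : ℝ} (hx : x ∈ s) : 0 < Φ' t x :=
  hΦ.2.2.2.2.2.2.1 t x hx

theorem deriv_add (hΦ : IsC1FlowOn s Φ Φ') (hs : UniqueDiffOn ℝ s) (t u : ℝ) {x : ℝ}
    (hx : x ∈ s) : Φ' (t + u) x = Φ' t (Φ u x) * Φ' u x := by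
  have hcomp := (hΦ.hasDerivWithinAt t (hΦ.mapsTo u hx)).comp x (hΦ.hasDerivWithinAt u hx)
    (hΦ.mapsTo u)
  have hfun : Φ t ∘ Φ u = Φ (t + u) := funext fun y => (hΦ.add_apply t u y).symm
  rw [hfun] at hcomp
  exact (hs x hx).eq_deriv s (hΦ.hasDerivWithinAt (t + u) hx) hcomp

theorem deriv_zero (hΦ : IsC1FlowOn s Φ Φ') (hs : UniqueDiffOn ℝ s) {x : ℝ} (hx : x ∈ s) :
    Φ' 0 x = 1 := by
  have h := hΦ.deriv_add hs 0 0 hx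
  rw [add_zero, hΦ.zero_apply] at h
  have := hΦ.deriv_pos 0 hx
  nlinarith

theorem tendstoUniformlyOn (hΦ : IsC1FlowOn s Φ Φ') (hs : IsCompact s) (t₀ : ℝ) :
    TendstoUniformlyOn Φ (Φ t₀) (𝓝 t₀) s := by
  refine Metric.tendstoUniformlyOn_iff.2 fun ε hε => ?_
  obtain ⟨δ, hδ, h⟩ := hΦ.2.2.2.2.2.2.2 t₀ s hs subset_rfl ε hε
  refine Metric.eventually_nhds_iff.2 ⟨δ, hδ, fun t ht x hx => ?_⟩
  have := h t ht x hx
  rw [Real.dist_eq, abs_sub_comm]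
  linarith [abs_nonneg (Real.log (Φ' t x) - Real.log (Φ' t₀ x))]

theorem tendstoUniformlyOn_log_deriv (hΦ : IsC1FlowOn s Φ Φ') (hs : IsCompact s) (t₀ : ℝ) :
    TendstoUniformlyOn (fun t x => Real.log (Φ' t x)) (fun x => Real.log (Φ' t₀ x))
      (𝓝 t₀) s := by
  refine Metric.tendstoUniformlyOn_iff.2 fun ε hε => ?_
  obtain ⟨δ, hδ, h⟩ := hΦ.2.2.2.2.2.2.2 t₀ s hs subset_rfl ε hε
  refine Metric.eventually_nhds_iff.2 ⟨δ, hδ, fun t ht x hx => ?_⟩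
  have := h t ht x hx
  rw [Real.dist_eq, abs_sub_comm]
  linarith [abs_nonneg (Φ t x - Φ t₀ x)]

theorem continuousOn_log_deriv (hΦ : IsC1FlowOn s Φ Φ') (t : ℝ) :
    ContinuousOn (fun x => Real.log (Φ' t x)) s :=
  (hΦ.continuousOn_deriv t).log fun _ hx => (hΦ.deriv_pos t hx).ne'

theorem continuousOn_uncurry (hΦ : IsC1FlowOn s Φ Φ') (hs : IsCompact s) :
    ContinuousOn (uncurry Φ) (univ ×ˢ s) :=
  continuousOn_uncurry_of_tendstoUniformlyOn hΦ.continuousOn (hΦ.tendstoUniformlyOn hs)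

theorem continuousOn_uncurry_log_deriv (hΦ : IsC1FlowOn s Φ Φ') (hs : IsCompact s) :
    ContinuousOn (uncurry fun t x => Real.log (Φ' t x)) (univ ×ˢ s) :=
  continuousOn_uncurry_of_tendstoUniformlyOn
    hΦ.continuousOn_log_deriv (hΦ.tendstoUniformlyOn_log_deriv hs)

theorem apply_left {a b : ℝ} (hΦ : IsC1FlowOn (Icc a b) Φ Φ') (hab : a ≤ b) (t : ℝ) :
    Φ t a = a := by
  have hmono : MonotoneOn (Φ t) (Icc a b) := by
    refine (strictMonoOn_of_deriv_pos (convex_Icc a b) (hΦ.continuousOn t)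
      fun x hx => ?_).monotoneOn
    rw [interior_Icc] at hx
    rw [((hΦ.hasDerivWithinAt t (Ioo_subset_Icc_self hx)).hasDerivAt
      (Icc_mem_nhds hx.1 hx.2)).deriv]
    exact hΦ.deriv_pos t (Ioo_subset_Icc_self hx)
  have ha : a ∈ Icc a b := left_mem_Icc.2 hab
  obtain ⟨x, hx, hxa⟩ := (hΦ.bijOn t).surjOn ha
  exact le_antisymm (hxa ▸ hmono ha hx hx.1) (hΦ.mapsTo t ha).1

theorem hasDerivAt_of_hasDerivAt_zero (hΦ : IsC1FlowOn s Φ Φ') {X : ℝ → ℝ}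
    (hX : ∀ y ∈ s, HasDerivAt (Φ · y) (X y) 0) (t : ℝ) {x : ℝ} (hx : x ∈ s) :
    HasDerivAt (Φ · x) (X (Φ t x)) t := by
  have h := HasDerivAt.comp_sub_const t t (by rw [sub_self]; exact hX _ (hΦ.mapsTo t hx))
  refine h.congr_of_eventuallyEq (Eventually.of_forall fun τ => ?_)
  simp only [← hΦ.add_apply, sub_add_cancel]

end IsC1FlowOn

def conjFlow (s : Set ℝ) [DecidablePred (· ∈ s)] (G H : ℝ → ℝ) (Φ : ℝ → ℝ → ℝ) (t y : ℝ) :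
    ℝ :=
  if y ∈ s then G (Φ t (H y)) else y

section Conj

variable {s : Set ℝ} [DecidablePred (· ∈ s)] {Φ Φ' : ℝ → ℝ → ℝ} {G G' H : ℝ → ℝ}

theorem conjFlow_of_mem {t y : ℝ} (hy : y ∈ s) : conjFlow s G H Φ t y = G (Φ t (H y)) :=
  if_pos hy

theorem conjFlow_of_notMem {t y : ℝ} (hy : y ∉ s) : conjFlow s G H Φ t y = y :=
  if_neg hy

namespace IsC1FlowOn

theorem conjFlow_piecewise (hΦ : IsC1FlowOn s Φ Φ') (hGs : MapsTo G s s) (hHG : LeftInvOn H G s)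
    (t x : ℝ) : conjFlow s G H Φ t (s.piecewise G id x) = s.piecewise G id (Φ t x) := by
  by_cases hx : x ∈ s
  · rw [piecewise_eq_of_mem _ _ _ hx, piecewise_eq_of_mem _ _ _ (hΦ.mapsTo t hx),
      conjFlow_of_mem (hGs hx), hHG hx]
  · rw [piecewise_eq_of_notMem _ _ _ hx, hΦ.apply_of_notMem t hx,
      piecewise_eq_of_notMem _ _ _ hx, id, conjFlow_of_notMem hx]

theorem conj (hΦ : IsC1FlowOn s Φ Φ') (hs : IsCompact s) (hGH : InvOn H G s s)
    (hGs : MapsTo G s s) (hHs : MapsTo H s s) (hG : ∀ x ∈ s, HasDerivWithinAt G (G' x) s x)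
    (hH : ∀ y ∈ s, HasDerivWithinAt H (G' (H y))⁻¹ s y) (hG'c : ContinuousOn G' s)
    (hG'pos : ∀ x ∈ s, 0 < G' x) :
    IsC1FlowOn s (conjFlow s G H Φ)
      fun t y => G' (Φ t (H y)) * Φ' t (H y) * (G' (H y))⁻¹ := by
  have hΦH (t : ℝ) : MapsTo (fun y => Φ t (H y)) s s := (hΦ.mapsTo t).comp hHs
  have hHc : ContinuousOn H s := fun y hy => (hH y hy).continuousWithinAt
  have hΦH_cont := (hΦ.continuousOn_uncurry hs).uncurry_comp_right hHc hHs
  have hΦH_mapsTo : MapsTo (uncurry fun t y => Φ t (H y)) (univ ×ˢ s) s :=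
    fun p hp => hΦH p.1 hp.2
  have hlogG' : ContinuousOn (fun x => Real.log (G' x)) s :=
    hG'c.log fun x hx => (hG'pos x hx).ne'
  refine of_continuousOn (fun y => ?_) (fun t u y => ?_) (fun t y hy => conjFlow_of_notMem hy)
    (fun t => ?_) (fun t y hy => ?_) (fun t => ?_) (fun t y hy => ?_) ?_ ?_
  · by_cases hy : y ∈ s
    · rw [conjFlow_of_mem hy, hΦ.zero_apply, hGH.2 hy]
    · exact conjFlow_of_notMem hy
  · by_cases hy : y ∈ s
    · rw [conjFlow_of_mem hy, conjFlow_of_mem hy, conjFlow_of_mem (hGs (hΦH u hy)),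
        hGH.1 (hΦH u hy), hΦ.add_apply]
    · rw [conjFlow_of_notMem hy, conjFlow_of_notMem hy, conjFlow_of_notMem hy]
  · exact ((hGH.bijOn hGs hHs).comp ((hΦ.bijOn t).comp (hGH.symm.bijOn hHs hGs))).congr
      fun y hy => (conjFlow_of_mem hy).symm
  · refine ((hG _ (hΦH t hy)).comp y ((hΦ.hasDerivWithinAt t (hHs hy)).comp y (hH y hy) hHs)
      (hΦH t)).congr (fun z hz => conjFlow_of_mem hz) (conjFlow_of_mem hy) |>.congr_deriv ?_
    ring
  · exact ((hG'c.comp (hΦ.continuousOn t) (hΦ.mapsTo t)).comp hHc hHs |>.mul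
      ((hΦ.continuousOn_deriv t).comp hHc hHs)).mul
      ((hG'c.comp hHc hHs).inv₀ fun y hy => (hG'pos _ (hHs hy)).ne')
  · exact mul_pos (mul_pos (hG'pos _ (hΦH t hy)) (hΦ.deriv_pos t (hHs hy)))
      (inv_pos.2 (hG'pos _ (hHs hy)))
  · have hGc : ContinuousOn G s := fun x hx => (hG x hx).continuousWithinAt
    exact (hGc.comp hΦH_cont hΦH_mapsTo).congr fun p hp => conjFlow_of_mem hp.2
  · refine (((hlogG'.comp hΦH_cont hΦH_mapsTo).add
      ((hΦ.continuousOn_uncurry_log_deriv hs).uncurry_comp_right hHc hHs)).sub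
      (hlogG'.comp (hHc.comp continuousOn_snd fun p hp => hp.2) fun p hp => hHs hp.2)).congr
      fun p hp => ?_
    have h₁ := hG'pos _ (hΦH p.1 hp.2)
    have h₂ := hΦ.deriv_pos p.1 (hHs hp.2)
    have h₃ := hG'pos _ (hHs hp.2)
    dsimp only [comp_apply, uncurry]
    rw [Real.log_mul (by positivity) (by positivity), Real.log_mul h₁.ne' h₂.ne', Real.log_inv,
      ← sub_eq_add_neg]
    rfl

end IsC1FlowOn

end Conj

def C1Diffeo.extendById (G G' : ℝ → ℝ) (h0 : G 0 = 0) (h1 : G 1 = 1)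
    (hG : BijOn G (Icc 0 1) (Icc 0 1))
    (hG' : ∀ x ∈ Icc (0:ℝ) 1, HasDerivWithinAt G (G' x) (Icc 0 1) x)
    (hc : ContinuousOn G' (Icc 0 1)) (hpos : ∀ x ∈ Icc (0:ℝ) 1, 0 < G' x) : C1Diffeo where
  toFun := (Icc 0 1).piecewise G id
  derivFun := G'
  map_zero := by rw [piecewise_eq_of_mem _ _ _ (left_mem_Icc.2 zero_le_one), h0]
  map_one := by rw [piecewise_eq_of_mem _ _ _ (right_mem_Icc.2 zero_le_one), h1]
  fixes_outside x hx := piecewise_eq_of_notMem _ _ _ hx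
  bijOn := hG.congr (piecewise_eqOn _ _ _).symm
  hasDeriv x hx := (hG' x hx).congr (piecewise_eqOn _ _ _) (piecewise_eq_of_mem _ _ _ hx)
  derivFun_cont := hc
  derivFun_pos := hpos

namespace Regularization

variable (Φ' : ℝ → ℝ → ℝ)

/-- Clamping `x` to `[0,1]` makes every function below defined and continuous on all of `ℝ`;
in particular `straighten Φ'` is affine outside `[0,1]`, hence a homeomorphism of `ℝ`. -/
def logDf (t x : ℝ) : ℝ := Real.log (Φ' t (projIcc 0 1 zero_le_one x))

def avgLogDf (t x : ℝ) : ℝ := ∫ σ in t..t + 1, logDf Φ' σ x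

def density (t x : ℝ) : ℝ :=
  Real.exp (avgLogDf Φ' t x) / ∫ y in (0:ℝ)..1, Real.exp (avgLogDf Φ' 0 y)

def straighten (x : ℝ) : ℝ := ∫ y in (0:ℝ)..x, density Φ' 0 y

variable {Φ Φ'}

theorem logDf_of_mem (t : ℝ) {x : ℝ} (hx : x ∈ Icc (0:ℝ) 1) :
    logDf Φ' t x = Real.log (Φ' t x) := by
  rw [logDf, projIcc_of_mem _ hx]

theorem logDf_projIcc (t x : ℝ) : logDf Φ' t (projIcc 0 1 zero_le_one x) = logDf Φ' t x := by
  rw [logDf, projIcc_val, logDf]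

theorem continuous_logDf (hΦ : IsC1FlowOn (Icc 0 1) Φ Φ') : Continuous (uncurry (logDf Φ')) :=
  (hΦ.continuousOn_uncurry_log_deriv isCompact_Icc).comp_continuous
    (f := fun p : ℝ × ℝ => (p.1, (projIcc 0 1 zero_le_one p.2 : ℝ))) (by fun_prop)
    fun p => ⟨trivial, Subtype.mem _⟩

theorem logDf_add (hΦ : IsC1FlowOn (Icc 0 1) Φ Φ') (t u : ℝ) {x : ℝ}
    (hx : x ∈ Icc (0:ℝ) 1) :
    logDf Φ' (t + u) x = logDf Φ' t (Φ u x) + logDf Φ' u x := by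
  rw [logDf_of_mem _ hx, logDf_of_mem _ (hΦ.mapsTo u hx), logDf_of_mem _ hx,
    hΦ.deriv_add (uniqueDiffOn_Icc one_pos) t u hx,
    Real.log_mul (hΦ.deriv_pos t (hΦ.mapsTo u hx)).ne' (hΦ.deriv_pos u hx).ne']

theorem logDf_zero (hΦ : IsC1FlowOn (Icc 0 1) Φ Φ') (x : ℝ) : logDf Φ' 0 x = 0 := by
  rw [logDf, hΦ.deriv_zero (uniqueDiffOn_Icc one_pos) (Subtype.mem _), Real.log_one]

theorem avgLogDf_eq (t x : ℝ) :
    avgLogDf Φ' t x = ∫ σ in (0:ℝ)..1, logDf Φ' (σ + t) x := by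
  rw [avgLogDf, intervalIntegral.integral_comp_add_right (logDf Φ' · x), zero_add, add_comm]

theorem continuous_avgLogDf (hΦ : IsC1FlowOn (Icc 0 1) Φ Φ') :
    Continuous (uncurry (avgLogDf Φ')) := by
  simp only [uncurry_def, avgLogDf_eq]
  exact intervalIntegral.continuous_parametric_intervalIntegral_of_continuous'
    (f := fun (p : ℝ × ℝ) (σ : ℝ) => logDf Φ' (σ + p.1) p.2) ((continuous_logDf hΦ).comp
      (by fun_prop : Continuous fun q : (ℝ × ℝ) × ℝ => (q.2 + q.1.1, q.1.2))) 0 1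

theorem avgLogDf_projIcc (t x : ℝ) :
    avgLogDf Φ' t (projIcc 0 1 zero_le_one x) = avgLogDf Φ' t x := by
  simp only [avgLogDf, logDf_projIcc]

theorem avgLogDf_zero_apply (hΦ : IsC1FlowOn (Icc 0 1) Φ Φ') (t : ℝ) {x : ℝ}
    (hx : x ∈ Icc (0:ℝ) 1) : avgLogDf Φ' 0 (Φ t x) = avgLogDf Φ' t x - logDf Φ' t x := by
  have hint : IntervalIntegrable (fun σ => logDf Φ' (σ + t) x) volume 0 1 :=
    ((continuous_logDf hΦ).comp
      (by fun_prop : Continuous fun σ : ℝ => (σ + t, x))).intervalIntegrable _ _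
  calc avgLogDf Φ' 0 (Φ t x) = ∫ σ in (0:ℝ)..1, (logDf Φ' (σ + t) x - logDf Φ' t x) := by
        rw [avgLogDf, zero_add]
        exact intervalIntegral.integral_congr fun σ _ => by
          rw [logDf_add hΦ σ t hx, add_sub_cancel_right]
    _ = avgLogDf Φ' t x - logDf Φ' t x := by
        rw [intervalIntegral.integral_sub hint intervalIntegrable_const, avgLogDf_eq]
        simp

theorem integral_exp_avgLogDf_pos (hΦ : IsC1FlowOn (Icc 0 1) Φ Φ') :
    0 < ∫ y in (0:ℝ)..1, Real.exp (avgLogDf Φ' 0 y) :=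
  intervalIntegral.intervalIntegral_pos_of_pos
    ((Real.continuous_exp.comp ((continuous_avgLogDf hΦ).comp
      (Continuous.prodMk_right 0))).intervalIntegrable _ _) (fun _ => Real.exp_pos _) one_pos

theorem continuous_density (hΦ : IsC1FlowOn (Icc 0 1) Φ Φ') :
    Continuous (uncurry (density Φ')) :=
  (Real.continuous_exp.comp (continuous_avgLogDf hΦ)).div_const _

theorem continuous_density_apply (hΦ : IsC1FlowOn (Icc 0 1) Φ Φ') (t : ℝ) :
    Continuous (density Φ' t) :=
  (continuous_density hΦ).comp (Continuous.prodMk_right t)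

theorem density_pos (hΦ : IsC1FlowOn (Icc 0 1) Φ Φ') (t x : ℝ) : 0 < density Φ' t x :=
  div_pos (Real.exp_pos _) (integral_exp_avgLogDf_pos hΦ)

theorem density_zero_apply_mul (hΦ : IsC1FlowOn (Icc 0 1) Φ Φ') (t : ℝ) {x : ℝ}
    (hx : x ∈ Icc (0:ℝ) 1) : density Φ' 0 (Φ t x) * Φ' t x = density Φ' t x := by
  have hΦ' : Φ' t x = Real.exp (logDf Φ' t x) := by
    rw [logDf_of_mem t hx, Real.exp_log (hΦ.deriv_pos t hx)]
  rw [density, density, avgLogDf_zero_apply hΦ t hx, hΦ', div_mul_eq_mul_div, ← Real.exp_add,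
    sub_add_cancel]

theorem hasDerivAt_density (hΦ : IsC1FlowOn (Icc 0 1) Φ Φ') (t x : ℝ) :
    HasDerivAt (density Φ' · x) (density Φ' t x * (logDf Φ' (t + 1) x - logDf Φ' t x)) t := by
  exact (((hasDerivAt_integral_self_add ((continuous_logDf hΦ).comp
    (Continuous.prodMk_left x)) 1 t).exp).div_const _).congr_deriv
    (div_mul_eq_mul_div _ _ _).symm

theorem exists_pos_le_density_zero (hΦ : IsC1FlowOn (Icc 0 1) Φ Φ') :
    ∃ m > 0, ∀ x, m ≤ density Φ' 0 x := by
  obtain ⟨x₀, -, hmin⟩ := isCompact_Icc.exists_isMinOn (nonempty_Icc.2 zero_le_one)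
    (continuous_density_apply hΦ 0).continuousOn
  refine ⟨density Φ' 0 x₀, density_pos hΦ 0 x₀, fun x => ?_⟩
  have hproj : density Φ' 0 (projIcc 0 1 zero_le_one x) = density Φ' 0 x := by
    rw [density, density, avgLogDf_projIcc]
  exact hproj ▸ isMinOn_iff.1 hmin _ (projIcc 0 1 zero_le_one x).2

theorem hasDerivAt_straighten (hΦ : IsC1FlowOn (Icc 0 1) Φ Φ') (x : ℝ) :
    HasDerivAt (straighten Φ') (density Φ' 0 x) x :=
  ((continuous_density_apply hΦ 0).integral_hasStrictDerivAt 0 x).hasDerivAt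

theorem straighten_zero : straighten Φ' 0 = 0 := intervalIntegral.integral_same

theorem straighten_one (hΦ : IsC1FlowOn (Icc 0 1) Φ Φ') : straighten Φ' 1 = 1 := by
  rw [straighten]
  simp only [density]
  rw [intervalIntegral.integral_div, div_self (integral_exp_avgLogDf_pos hΦ).ne']

theorem straighten_strictMono (hΦ : IsC1FlowOn (Icc 0 1) Φ Φ') : StrictMono (straighten Φ') :=
  strictMono_of_deriv_pos fun x => (hasDerivAt_straighten hΦ x).deriv ▸ density_pos hΦ 0 x

theorem straighten_surjective (hΦ : IsC1FlowOn (Icc 0 1) Φ Φ') : Surjective (straighten Φ') :=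
  let ⟨_, hm, hle⟩ := exists_pos_le_density_zero hΦ
  surjective_of_hasDerivAt_of_le hm (hasDerivAt_straighten hΦ) hle

theorem straighten_apply (hΦ : IsC1FlowOn (Icc 0 1) Φ Φ') (t : ℝ) {x : ℝ}
    (hx : x ∈ Icc (0:ℝ) 1) :
    straighten Φ' (Φ t x) = ∫ z in (0:ℝ)..x, density Φ' t z := by
  have hsub : uIcc 0 x ⊆ Icc (0:ℝ) 1 := by
    rw [uIcc_of_le hx.1]; exact Icc_subset_Icc le_rfl hx.2
  have hderiv : ∀ z ∈ Ioo (min 0 x) (max 0 x), HasDerivWithinAt (Φ t) (Φ' t z) (Ioi z) z := by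
    intro z hz
    rw [min_eq_left hx.1, max_eq_right hx.1] at hz
    exact ((hΦ.hasDerivWithinAt t (Ioo_subset_Icc_self ⟨hz.1, hz.2.trans_le hx.2⟩)).hasDerivAt
      (Icc_mem_nhds hz.1 (hz.2.trans_le hx.2))).hasDerivWithinAt
  have hcv := intervalIntegral.integral_comp_mul_deriv'' ((hΦ.continuousOn t).mono hsub) hderiv
    ((hΦ.continuousOn_deriv t).mono hsub)
    (continuous_density_apply hΦ 0).continuousOn
  rw [hΦ.apply_left zero_le_one] at hcv
  rw [straighten, ← hcv]
  refine intervalIntegral.integral_congr fun z hz => ?_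
  exact density_zero_apply_mul hΦ t (hsub hz)

def straightenIso (hΦ : IsC1FlowOn (Icc 0 1) Φ Φ') : ℝ ≃o ℝ :=
  StrictMono.orderIsoOfSurjective _ (straighten_strictMono hΦ) (straighten_surjective hΦ)

theorem coe_straightenIso (hΦ : IsC1FlowOn (Icc 0 1) Φ Φ') :
    ⇑(straightenIso hΦ) = straighten Φ' :=
  rfl

theorem image_straightenIso (hΦ : IsC1FlowOn (Icc 0 1) Φ Φ') :
    straightenIso hΦ '' Icc 0 1 = Icc 0 1 := by
  rw [OrderIso.image_Icc, coe_straightenIso, straighten_zero, straighten_one hΦ]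

theorem image_straightenIso_symm (hΦ : IsC1FlowOn (Icc 0 1) Φ Φ') :
    (straightenIso hΦ).symm '' Icc 0 1 = Icc 0 1 := by
  conv_lhs => rw [← image_straightenIso hΦ, OrderIso.symm_image_image]

theorem mapsTo_straightenIso (hΦ : IsC1FlowOn (Icc 0 1) Φ Φ') :
    MapsTo (straightenIso hΦ) (Icc 0 1) (Icc 0 1) := by
  rw [mapsTo_iff_image_subset, image_straightenIso hΦ]

theorem mapsTo_straightenIso_symm (hΦ : IsC1FlowOn (Icc 0 1) Φ Φ') :
    MapsTo (straightenIso hΦ).symm (Icc 0 1) (Icc 0 1) := by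
  rw [mapsTo_iff_image_subset, image_straightenIso_symm hΦ]

theorem hasDerivAt_straightenIso_symm (hΦ : IsC1FlowOn (Icc 0 1) Φ Φ') (y : ℝ) :
    HasDerivAt (straightenIso hΦ).symm (density Φ' 0 ((straightenIso hΦ).symm y))⁻¹ y :=
  HasDerivAt.of_local_left_inverse (straightenIso hΦ).symm.continuous.continuousAt
    (hasDerivAt_straighten hΦ _) (density_pos hΦ 0 _).ne'
    (Eventually.of_forall (straightenIso hΦ).apply_symm_apply)

def vectorField (hΦ : IsC1FlowOn (Icc 0 1) Φ Φ') (y : ℝ) : ℝ :=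
  ∫ z in (0:ℝ)..(straightenIso hΦ).symm y, density Φ' 0 z * logDf Φ' 1 z

theorem hasDerivAt_vectorField (hΦ : IsC1FlowOn (Icc 0 1) Φ Φ') (y : ℝ) :
    HasDerivAt (vectorField hΦ) (logDf Φ' 1 ((straightenIso hΦ).symm y)) y := by
  have hcont : Continuous fun z => density Φ' 0 z * logDf Φ' 1 z :=
    (continuous_density_apply hΦ 0).mul ((continuous_logDf hΦ).comp (Continuous.prodMk_right 1))
  refine ((hcont.integral_hasStrictDerivAt 0 _).hasDerivAt.comp y
    (hasDerivAt_straightenIso_symm hΦ y)).congr_deriv ?_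
  rw [mul_comm (density Φ' 0 _), mul_assoc, mul_inv_cancel₀ (density_pos hΦ 0 _).ne', mul_one]

theorem continuous_logDf_one_comp_straightenIso_symm (hΦ : IsC1FlowOn (Icc 0 1) Φ Φ') :
    Continuous fun y => logDf Φ' 1 ((straightenIso hΦ).symm y) :=
  (continuous_logDf hΦ).comp ((Continuous.prodMk_right 1).comp (straightenIso hΦ).symm.continuous)

theorem hasDerivAt_conjFlow_zero (hΦ : IsC1FlowOn (Icc 0 1) Φ Φ') {y : ℝ}
    (hy : y ∈ Icc (0:ℝ) 1) :
    HasDerivAt (conjFlow (Icc 0 1) (straightenIso hΦ) (straightenIso hΦ).symm Φ · y)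
      (vectorField hΦ y) 0 := by
  have hflow : (conjFlow (Icc 0 1) (straightenIso hΦ) (straightenIso hΦ).symm Φ · y) =
      fun τ => ∫ z in (0:ℝ)..(straightenIso hΦ).symm y, density Φ' τ z := by
    ext τ
    rw [conjFlow_of_mem hy, coe_straightenIso,
      straighten_apply hΦ τ (mapsTo_straightenIso_symm hΦ hy)]
  have hF' : Continuous
      (uncurry fun τ z => density Φ' τ z * (logDf Φ' (τ + 1) z - logDf Φ' τ z)) :=
    (continuous_density hΦ).mul (((continuous_logDf hΦ).comp
      (by fun_prop : Continuous fun p : ℝ × ℝ => (p.1 + 1, p.2))).sub (continuous_logDf hΦ))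
  have h := hasDerivAt_integral_of_continuous_deriv (continuous_density_apply hΦ) hF'
    (hasDerivAt_density hΦ) 0 ((straightenIso hΦ).symm y) 0
  simp only [zero_add, logDf_zero hΦ, sub_zero] at h
  rwa [hflow]

theorem eVariationOn_logDf_one_comp_straightenIso_symm (hΦ : IsC1FlowOn (Icc 0 1) Φ Φ') :
    eVariationOn (fun y => logDf Φ' 1 ((straightenIso hΦ).symm y)) (Icc 0 1) =
      eVariationOn (fun x => Real.log (Φ' 1 x)) (Icc 0 1) := by
  rw [← comp_def, eVariationOn.comp_eq_of_monotoneOn _ _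
    ((straightenIso hΦ).symm.monotone.monotoneOn _), image_straightenIso_symm hΦ]
  exact eVariationOn.eq_of_eqOn fun x hx => logDf_of_mem 1 hx

end Regularization

open Regularization

/-- **Regularization Lemma.** If `(fᵗ) = Φ` is a `C¹` flow of diffeomorphisms of `[0,1]` whose
time-1 map `f = Φ 1` is of class `Cʳ`, `r ∈ {1, 1+bv, 1+ac}`, then it is conjugated by an
orientation-preserving `C¹` diffeomorphism `φ` to the flow `Ψ` of a `Cʳ` vector field `X`
satisfying `var(DX) = var(log Df)` (an equality in `ℝ≥0∞`, so this covers both the `C¹` and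
the `C^{1+bv}` cases at once; the final implication is the `C^{1+ac}` case). -/
theorem regularization_lemma (Φ Φ' : ℝ → ℝ → ℝ)
    (hΦ : IsC1FlowOn (Icc (0:ℝ) 1) Φ Φ') :
    ∃ φ : C1Diffeo, ∃ Ψ Ψ' : ℝ → ℝ → ℝ, ∃ X X' : ℝ → ℝ,
      IsC1FlowOn (Icc (0:ℝ) 1) Ψ Ψ' ∧
      -- `φ` conjugates the flow `Φ` to the flow `Ψ`
      (∀ t : ℝ, ∀ x : ℝ, Ψ t (φ.toFun x) = φ.toFun (Φ t x)) ∧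
      -- `X` is a `C¹` vector field, with derivative `X'`
      (∀ x ∈ Icc (0:ℝ) 1, HasDerivWithinAt X (X' x) (Icc (0:ℝ) 1) x) ∧
      ContinuousOn X' (Icc (0:ℝ) 1) ∧
      -- `X` generates the flow `Ψ`
      (∀ x ∈ Icc (0:ℝ) 1, ∀ t : ℝ, HasDerivAt (fun τ => Ψ τ x) (X (Ψ t x)) t) ∧
      -- `var(DX) = var(log Df)` where `f = Φ 1` is the time-1 map
      eVariationOn X' (Icc (0:ℝ) 1) =
        eVariationOn (fun x => Real.log (Φ' 1 x)) (Icc (0:ℝ) 1) ∧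
      -- if `f` is moreover `C^{1+ac}` then so is the vector field `X`
      ((∃ h : ℝ → ℝ, IntegrableOn h (Icc (0:ℝ) 1) ∧ ∀ x ∈ Icc (0:ℝ) 1,
          Real.log (Φ' 1 x) = Real.log (Φ' 1 0) + ∫ s in (0:ℝ)..x, h s) →
        (∃ h : ℝ → ℝ, IntegrableOn h (Icc (0:ℝ) 1) ∧ ∀ x ∈ Icc (0:ℝ) 1,
          X' x = X' 0 + ∫ s in (0:ℝ)..x, h s)) := by
  set e := straightenIso hΦ
  have he : ∀ x, HasDerivAt e (density Φ' 0 x) x := hasDerivAt_straighten hΦ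
  have hmaps := mapsTo_straightenIso hΦ
  have hmaps_symm := mapsTo_straightenIso_symm hΦ
  have hinv : InvOn e.symm e (Icc 0 1) (Icc 0 1) :=
    ⟨fun x _ => e.symm_apply_apply x, fun y _ => e.apply_symm_apply y⟩
  have hρ := (continuous_density_apply hΦ 0).continuousOn (s := Icc 0 1)
  have hΨ := hΦ.conj isCompact_Icc hinv hmaps hmaps_symm (fun x _ => (he x).hasDerivWithinAt)
    (fun y _ => (hasDerivAt_straightenIso_symm hΦ y).hasDerivWithinAt) hρ
    (fun x _ => density_pos hΦ 0 x)
  refine ⟨C1Diffeo.extendById e (density Φ' 0) straighten_zero (straighten_one hΦ)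
      (hinv.bijOn hmaps hmaps_symm) (fun x _ => (he x).hasDerivWithinAt) hρ
      (fun x _ => density_pos hΦ 0 x), _, _, vectorField hΦ,
    fun y => logDf Φ' 1 (e.symm y), hΨ, hΦ.conjFlow_piecewise hmaps hinv.1,
    fun y _ => (hasDerivAt_vectorField hΦ y).hasDerivWithinAt,
    (continuous_logDf_one_comp_straightenIso_symm hΦ).continuousOn,
    fun x hx t => hΨ.hasDerivAt_of_hasDerivAt_zero (fun _ hy => hasDerivAt_conjFlow_zero hΦ hy)
      t hx,
    eVariationOn_logDf_one_comp_straightenIso_symm hΦ, fun ⟨h, hh, hf⟩ => ?_⟩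
  have hf' : ∀ x ∈ Icc (0:ℝ) 1, logDf Φ' 1 x = logDf Φ' 1 0 + ∫ s in (0:ℝ)..x, h s := by
    intro x hx
    rw [logDf_of_mem 1 hx, logDf_of_mem 1 (left_mem_Icc.2 zero_le_one), hf x hx]
  exact e.symm.exists_integral_repr_comp (hasDerivAt_straightenIso_symm hΦ)
    (e.symm_apply_eq.2 straighten_zero.symm) (e.symm_apply_eq.2 (straighten_one hΦ).symm) hh hf'
end
end

section
/- Let X be a C^{1+ac} vector field on [0,1] (vanishing at the endpoints), and let (f^t) be its flow. Then (f^t) is a C^{1+ac} flow, i.e. each f^t is a C^{1+ac} diffeomorphism and the map t ↦ f^t is continuous from R into the C^{1+ac} diffeomorphisms; moreover var(log Df^t) ≤ |t|·var(DX) for every t ∈ R. -/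
/-!
The slope of `Φ t` between `x` and `y` is `exp ∫₀ᵗ slope X (Φ s x) (Φ s y) ds` (differentiate
`log (Φ s y - Φ s x)` in `s`), so by dominated convergence `Φ t` is differentiable with
`∂ₓΦ t x = exp ∫₀ᵗ X' (Φ s x) ds`. Hence `log ∂ₓΦ t x - log ∂ₓΦ t 0 = ∫₀ᵗ (X' (Φ s x) - X' 0) ds`,
and since `X' (Φ s x) - X' 0 = ∫₀ˣ h (Φ s u) ∂ᵤΦ s u du` by a change of variables, Fubini shows
that `log ∂ₓΦ t` is the primitive of `u ↦ ∫₀ᵗ h (Φ s u) ∂ᵤΦ s u ds`. The change of variables also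
shows that `u ↦ h (Φ s u) ∂ᵤΦ s u` has the same `L¹` norm as `h` for every `s`, which gives
`var (log ∂ₓΦ t - log ∂ₓΦ t₀) ≤ |t - t₀| ‖h‖₁`: the variation bound for `t₀ = 0`, and, together
with `|Φ t x - Φ t₀ x| ≤ ‖X‖_∞ |t - t₀|`, the continuity of `t ↦ Φ t`.
-/

open Set MeasureTheory Filter Topology

noncomputable section

/-- A `C^{1+ac}` diffeomorphism of `[0,1]`: a `C¹` diffeomorphism whose logarithmic derivative
`log Df` is absolutely continuous, i.e. the primitive of an `L¹` density `dlog = D (log Df)`. -/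
structure C1acDiffeo extends C1Diffeo where
  dlog : ℝ → ℝ
  dlog_int : IntegrableOn dlog (Icc (0:ℝ) 1)
  dlog_prim : ∀ x ∈ Icc (0:ℝ) 1,
    Real.log (derivFun x) = Real.log (derivFun 0) + ∫ t in (0:ℝ)..x, dlog t

/-- The `C^{1+ac}` distance `‖f-g‖_∞ + ‖D(log Df - log Dg)‖_{L¹}`. -/
def dist1ac (f g : C1acDiffeo) : ℝ :=
  supDist01 f.toFun g.toFun + ∫ x in Icc (0:ℝ) 1, |f.dlog x - g.dlog x|

open scoped NNReal

local notation "I" => Icc (0:ℝ) 1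

theorem norm_le_exp_mul_norm_zero_of_norm_deriv_le {E : Type*} [NormedAddCommGroup E]
    [NormedSpace ℝ E] {u U : ℝ → E} {K : ℝ} (hu : ∀ s, HasDerivAt u (U s) s)
    (hU : ∀ s, ‖U s‖ ≤ K * ‖u s‖) (t : ℝ) : ‖u t‖ ≤ Real.exp (K * |t|) * ‖u 0‖ := by
  have forward : ∀ {v V : ℝ → E}, (∀ s, HasDerivAt v (V s) s) → (∀ s, ‖V s‖ ≤ K * ‖v s‖) →
      ∀ t, 0 ≤ t → ‖v t‖ ≤ Real.exp (K * t) * ‖v 0‖ := by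
    intro v V hv hV t ht
    have := norm_le_gronwallBound_of_norm_deriv_right_le (ε := 0) (a := 0) (b := t)
      (fun s _ => (hv s).continuousAt.continuousWithinAt) (fun s _ => (hv s).hasDerivWithinAt)
      le_rfl (fun s _ => by simpa using hV s) t ⟨ht, le_rfl⟩
    rwa [gronwallBound_ε0, sub_zero, mul_comm] at this
  rcases le_total 0 t with ht | ht
  · simpa [abs_of_nonneg ht] using forward hu hU t ht
  · have := forward (v := fun s => u (-s)) (V := fun s => -U (-s))
      (fun s => by simpa [Function.comp_def] using (hu (-s)).scomp s (hasDerivAt_neg s))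
      (fun s => by simpa using hU (-s)) (-t) (neg_nonneg.2 ht)
    simpa [abs_of_nonpos ht] using this

theorem LipschitzOnWith.abs_slope_le {f : ℝ → ℝ} {K : ℝ≥0} {s : Set ℝ}
    (hf : LipschitzOnWith K f s) {a b : ℝ} (ha : a ∈ s) (hb : b ∈ s) : |slope f a b| ≤ K := by
  rcases eq_or_ne a b with rfl | hab
  · simp
  rw [slope_def_field, abs_div, div_le_iff₀ (abs_pos.2 (sub_ne_zero.2 hab.symm))]
  simpa [Real.dist_eq] using hf.dist_le_mul b hb a ha

theorem IsCompact.exists_nnnorm_le_of_continuousOn {α E : Type*} [TopologicalSpace α]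
    [SeminormedAddCommGroup E] {s : Set α} {f : α → E} (hs : IsCompact s)
    (hf : ContinuousOn f s) : ∃ C : ℝ≥0, ∀ x ∈ s, ‖f x‖₊ ≤ C := by
  obtain ⟨C, hC⟩ := hs.bddAbove_image hf.nnnorm
  exact ⟨C, fun x hx => hC (mem_image_of_mem _ hx)⟩

structure IsFlowOn (X : ℝ → ℝ) (s : Set ℝ) (Φ : ℝ → ℝ → ℝ) : Prop where
  zero_apply : ∀ x, Φ 0 x = x
  add_apply : ∀ t t' x, Φ (t + t') x = Φ t (Φ t' x)
  apply_of_notMem : ∀ t, ∀ x ∉ s, Φ t x = x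
  hasDerivAt : ∀ x ∈ s, ∀ t, HasDerivAt (fun τ => Φ τ x) (X (Φ t x)) t

namespace IsFlowOn

variable {X : ℝ → ℝ} {s : Set ℝ} {Φ : ℝ → ℝ → ℝ} {K M : ℝ≥0}

theorem neg_apply_apply (hΦ : IsFlowOn X s Φ) (t x : ℝ) : Φ (-t) (Φ t x) = x := by
  rw [← hΦ.add_apply, neg_add_cancel, hΦ.zero_apply]

theorem injective (hΦ : IsFlowOn X s Φ) (t : ℝ) : Function.Injective (Φ t) :=
  Function.LeftInverse.injective (hΦ.neg_apply_apply t)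

theorem mapsTo (hΦ : IsFlowOn X s Φ) (t : ℝ) : MapsTo (Φ t) s s := by
  intro x hx
  by_contra hout
  have h := hΦ.apply_of_notMem (-t) _ hout
  rw [hΦ.neg_apply_apply] at h
  exact hout (h ▸ hx)

theorem continuous_apply (hΦ : IsFlowOn X s Φ) {x : ℝ} (hx : x ∈ s) :
    Continuous fun t => Φ t x :=
  continuous_iff_continuousAt.2 fun t => (hΦ.hasDerivAt x hx t).continuousAt

theorem lipschitzWith_apply (hΦ : IsFlowOn X s Φ) (hM : ∀ x ∈ s, ‖X x‖₊ ≤ M) {x : ℝ}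
    (hx : x ∈ s) : LipschitzWith M fun t => Φ t x := by
  rw [← lipschitzOnWith_univ]
  exact convex_univ.lipschitzOnWith_of_nnnorm_hasDerivWithin_le
    (fun t _ => (hΦ.hasDerivAt x hx t).hasDerivWithinAt) fun t _ => hM _ (hΦ.mapsTo t hx)

theorem dist_apply_le (hΦ : IsFlowOn X s Φ) (hX : LipschitzOnWith K X s) {x y : ℝ}
    (hx : x ∈ s) (hy : y ∈ s) (t : ℝ) :
    dist (Φ t x) (Φ t y) ≤ Real.exp (K * |t|) * dist x y := by
  have := norm_le_exp_mul_norm_zero_of_norm_deriv_le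
    (fun τ => (hΦ.hasDerivAt x hx τ).sub (hΦ.hasDerivAt y hy τ))
    (fun τ => by
      simpa [← dist_eq_norm] using hX.dist_le_mul _ (hΦ.mapsTo τ hx) _ (hΦ.mapsTo τ hy)) t
  simpa [dist_eq_norm, hΦ.zero_apply] using this

theorem continuousOn (hΦ : IsFlowOn X s Φ) (hX : LipschitzOnWith K X s) (t : ℝ) :
    ContinuousOn (Φ t) s :=
  (LipschitzOnWith.of_dist_le_mul (K := (Real.exp (K * |t|)).toNNReal) fun x hx y hy => by
    simpa [Real.coe_toNNReal _ (Real.exp_pos _).le] using hΦ.dist_apply_le hX hx hy t).continuousOn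

theorem apply_eq_self_of_eq_zero (hΦ : IsFlowOn X s Φ) (hX : LipschitzOnWith K X s) {a : ℝ}
    (ha : a ∈ s) (hXa : X a = 0) (t : ℝ) : Φ t a = a := by
  have := norm_le_exp_mul_norm_zero_of_norm_deriv_le (fun τ => (hΦ.hasDerivAt a ha τ).sub_const a)
    (fun τ => by simpa [← dist_eq_norm, hXa] using hX.dist_le_mul _ (hΦ.mapsTo τ ha) _ ha) t
  simpa [hΦ.zero_apply, sub_eq_zero] using this

end IsFlowOn

-- Clamping the point to `[0,1]` makes a flow on `[0,1]` jointly continuous on all of `ℝ²`.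
def clampedFlow (Φ : ℝ → ℝ → ℝ) (t x : ℝ) : ℝ := Φ t (projIcc 0 1 zero_le_one x)

theorem clampedFlow_of_mem {Φ : ℝ → ℝ → ℝ} {t x : ℝ} (hx : x ∈ I) :
    clampedFlow Φ t x = Φ t x := by
  simp [clampedFlow, projIcc_of_mem _ hx]

def flowDeriv (X' : ℝ → ℝ) (Φ : ℝ → ℝ → ℝ) (t x : ℝ) : ℝ :=
  Real.exp (∫ s in (0:ℝ)..t, X' (clampedFlow Φ s x))

theorem flowDeriv_of_mem {X' : ℝ → ℝ} {Φ : ℝ → ℝ → ℝ} {t x : ℝ} (hx : x ∈ I) :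
    flowDeriv X' Φ t x = Real.exp (∫ s in (0:ℝ)..t, X' (Φ s x)) := by
  simp only [flowDeriv, clampedFlow_of_mem hx]

theorem flowDeriv_pos {X' : ℝ → ℝ} {Φ : ℝ → ℝ → ℝ} {t x : ℝ} : 0 < flowDeriv X' Φ t x :=
  Real.exp_pos _

namespace IsFlowOn

variable {X X' : ℝ → ℝ} {s : Set ℝ} {Φ : ℝ → ℝ → ℝ} {K M : ℝ≥0}

theorem strictMonoOn (hΦ : IsFlowOn X I Φ) (hX : LipschitzOnWith K X I) (hX0 : X 0 = 0)
    (hX1 : X 1 = 0) (t : ℝ) : StrictMonoOn (Φ t) I :=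
  (hΦ.continuousOn hX t).strictMonoOn_of_injOn_Icc zero_le_one
    (by rw [hΦ.apply_eq_self_of_eq_zero hX (left_mem_Icc.2 zero_le_one) hX0,
      hΦ.apply_eq_self_of_eq_zero hX (right_mem_Icc.2 zero_le_one) hX1]; exact zero_le_one)
    (hΦ.injective t).injOn

theorem continuous_clampedFlow (hΦ : IsFlowOn X I Φ) (hX : LipschitzOnWith K X I)
    (hM : ∀ x ∈ I, ‖X x‖₊ ≤ M) : Continuous (Function.uncurry (clampedFlow Φ)) :=
  continuous_prod_of_continuous_lipschitzWith _ M
    (fun t => (hΦ.continuousOn hX t).comp_continuous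
      (continuous_subtype_val.comp continuous_projIcc) fun _ => Subtype.prop _)
    fun x => hΦ.lipschitzWith_apply hM (projIcc 0 1 zero_le_one x).2

theorem slope_eq_exp_integral_slope (hΦ : IsFlowOn X s Φ) (hX : ContinuousOn X s) {t x y : ℝ}
    (hmono : StrictMonoOn (Φ t) s) (hx : x ∈ s) (hy : y ∈ s) (hyx : y ≠ x) :
    slope (Φ t) x y = Real.exp (∫ τ in (0:ℝ)..t, slope X (Φ τ x) (Φ τ y)) := by
  have hne : ∀ τ, Φ τ y - Φ τ x ≠ 0 := fun τ => sub_ne_zero.2 ((hΦ.injective τ).ne hyx)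
  have hXΦ : ∀ {z}, z ∈ s → Continuous fun τ => X (Φ τ z) := fun hz =>
    hX.comp_continuous (hΦ.continuous_apply hz) fun τ => hΦ.mapsTo τ hz
  have hlog : ∀ τ, HasDerivAt (fun τ => Real.log (Φ τ y - Φ τ x))
      (slope X (Φ τ x) (Φ τ y)) τ := fun τ => by
    rw [slope_def_field]
    exact ((hΦ.hasDerivAt y hy τ).sub (hΦ.hasDerivAt x hx τ)).log (hne τ)
  have hcont : Continuous fun τ => slope X (Φ τ x) (Φ τ y) := by
    simp only [slope_def_field]
    exact ((hXΦ hy).sub (hXΦ hx)).div ((hΦ.continuous_apply hy).sub (hΦ.continuous_apply hx)) hne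
  have hpos : 0 < slope (Φ t) x y := by
    rw [slope_def_field]
    rcases hyx.lt_or_gt with h | h
    · exact div_pos_of_neg_of_neg (sub_neg.2 (hmono hy hx h)) (sub_neg.2 h)
    · exact div_pos (sub_pos.2 (hmono hx hy h)) (sub_pos.2 h)
  rw [intervalIntegral.integral_eq_sub_of_hasDerivAt (fun τ _ => hlog τ)
    (hcont.intervalIntegrable _ _), hΦ.zero_apply, hΦ.zero_apply, Real.exp_sub,
    Real.exp_log_eq_abs (hne t), Real.exp_log_eq_abs (sub_ne_zero.2 hyx), ← abs_div,
    ← slope_def_field, abs_of_pos hpos]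

theorem tendsto_integral_slope (hΦ : IsFlowOn X s Φ) (hX : LipschitzOnWith K X s)
    (hX' : ∀ x ∈ s, HasDerivWithinAt X (X' x) s x) {x : ℝ} (hx : x ∈ s) (t : ℝ) :
    Tendsto (fun y => ∫ τ in (0:ℝ)..t, slope X (Φ τ x) (Φ τ y)) (𝓝[s \ {x}] x)
      (𝓝 (∫ τ in (0:ℝ)..t, X' (Φ τ x))) := by
  have hXΦ : ∀ {z}, z ∈ s → Continuous fun τ => X (Φ τ z) := fun hz =>
    hX.continuousOn.comp_continuous (hΦ.continuous_apply hz) fun τ => hΦ.mapsTo τ hz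
  refine intervalIntegral.tendsto_integral_filter_of_dominated_convergence (fun _ => K) ?_ ?_
    intervalIntegrable_const (ae_of_all _ fun τ _ => ?_)
  · filter_upwards [self_mem_nhdsWithin] with y hy
    simp only [slope_def_module]
    exact (((hΦ.continuous_apply hy.1).sub (hΦ.continuous_apply hx)).measurable.inv.smul
      ((hXΦ hy.1).sub (hXΦ hx)).measurable).aestronglyMeasurable
  · filter_upwards [self_mem_nhdsWithin] with y hy
    exact ae_of_all _ fun τ _ => hX.abs_slope_le (hΦ.mapsTo τ hx) (hΦ.mapsTo τ hy.1)
  · have hmaps : MapsTo (Φ τ) (s \ {x}) (s \ {Φ τ x}) := fun y hy =>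
      ⟨hΦ.mapsTo τ hy.1, fun h => hy.2 ((hΦ.injective τ) h)⟩
    exact ((hasDerivWithinAt_iff_tendsto_slope.1 (hX' _ (hΦ.mapsTo τ hx))).comp
      (((hΦ.continuousOn hX τ x hx).mono sdiff_subset).tendsto_nhdsWithin hmaps))

theorem hasDerivWithinAt_flowDeriv (hΦ : IsFlowOn X I Φ) (hX : LipschitzOnWith K X I)
    (hX' : ∀ x ∈ I, HasDerivWithinAt X (X' x) I x) {t x : ℝ} (hmono : StrictMonoOn (Φ t) I)
    (hx : x ∈ I) : HasDerivWithinAt (Φ t) (flowDeriv X' Φ t x) I x := by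
  rw [hasDerivWithinAt_iff_tendsto_slope, flowDeriv_of_mem hx]
  refine ((Real.continuous_exp.tendsto _).comp (hΦ.tendsto_integral_slope hX hX' hx t)).congr' ?_
  filter_upwards [self_mem_nhdsWithin] with y hy
  exact (hΦ.slope_eq_exp_integral_slope hX.continuousOn hmono hx hy.1 hy.2).symm

end IsFlowOn

theorem setIntegral_Icc_deriv_mul_comp {f f' : ℝ → ℝ} {a b : ℝ} (hab : a ≤ b)
    (hf : StrictMonoOn f (Icc a b)) (hf' : ∀ x ∈ Icc a b, HasDerivWithinAt f (f' x) (Icc a b) x)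
    (hf'_nonneg : ∀ x ∈ Icc a b, 0 ≤ f' x) (G : ℝ → ℝ) :
    ∫ u in Icc a b, f' u * G (f u) = ∫ u in Icc (f a) (f b), G u := by
  rw [← ContinuousOn.image_Icc_of_monotoneOn hab (fun x hx => (hf' x hx).continuousWithinAt)
    hf.monotoneOn, integral_image_eq_integral_abs_deriv_smul measurableSet_Icc hf' hf.injOn]
  exact setIntegral_congr_fun measurableSet_Icc fun x hx => by
    simp [abs_of_nonneg (hf'_nonneg x hx)]

theorem integrableOn_Icc_deriv_mul_comp {f f' G : ℝ → ℝ} {a b : ℝ} (hab : a ≤ b)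
    (hf : StrictMonoOn f (Icc a b)) (hf' : ∀ x ∈ Icc a b, HasDerivWithinAt f (f' x) (Icc a b) x)
    (hf'_nonneg : ∀ x ∈ Icc a b, 0 ≤ f' x) (hG : IntegrableOn G (Icc (f a) (f b))) :
    IntegrableOn (fun u => f' u * G (f u)) (Icc a b) := by
  rw [← ContinuousOn.image_Icc_of_monotoneOn hab (fun x hx => (hf' x hx).continuousWithinAt)
    hf.monotoneOn, integrableOn_image_iff_integrableOn_abs_deriv_smul measurableSet_Icc hf'
    hf.injOn] at hG
  exact hG.congr_fun (fun x hx => by simp [abs_of_nonneg (hf'_nonneg x hx)]) measurableSet_Icc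

theorem continuous_flowDeriv {X' : ℝ → ℝ} {Φ : ℝ → ℝ → ℝ}
    (hΦ : Continuous (Function.uncurry (clampedFlow Φ))) (hmem : ∀ t x, clampedFlow Φ t x ∈ I)
    (hX' : ContinuousOn X' I) : Continuous (Function.uncurry (flowDeriv X' Φ)) :=
  Real.continuous_exp.comp <|
    (intervalIntegral.continuous_parametric_primitive_of_continuous (μ := volume) (a₀ := 0)
      (f := fun x s => X' (clampedFlow Φ s x))
      (hX'.comp_continuous (hΦ.comp continuous_swap) fun _ => hmem _ _)).comp continuous_swap

structure IsC1Flow (X' : ℝ → ℝ) (Φ : ℝ → ℝ → ℝ) : Prop where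
  apply_zero : ∀ t, Φ t 0 = 0
  apply_one : ∀ t, Φ t 1 = 1
  apply_of_notMem : ∀ t, ∀ x ∉ I, Φ t x = x
  strictMonoOn : ∀ t, StrictMonoOn (Φ t) I
  hasDerivWithinAt : ∀ t, ∀ x ∈ I, HasDerivWithinAt (Φ t) (flowDeriv X' Φ t x) I x
  continuous_clampedFlow : Continuous (Function.uncurry (clampedFlow Φ))
  continuous_flowDeriv : Continuous (Function.uncurry (flowDeriv X' Φ))

theorem IsFlowOn.isC1Flow {X X' : ℝ → ℝ} {Φ : ℝ → ℝ → ℝ} (hΦ : IsFlowOn X I Φ) (hX0 : X 0 = 0)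
    (hX1 : X 1 = 0) (hX' : ∀ x ∈ I, HasDerivWithinAt X (X' x) I x) (hX'c : ContinuousOn X' I) :
    IsC1Flow X' Φ := by
  obtain ⟨K, hK⟩ := isCompact_Icc.exists_nnnorm_le_of_continuousOn hX'c
  have hX : LipschitzOnWith K X I :=
    (convex_Icc 0 1).lipschitzOnWith_of_nnnorm_hasDerivWithin_le hX' hK
  obtain ⟨M, hM⟩ := isCompact_Icc.exists_nnnorm_le_of_continuousOn hX.continuousOn
  have hmono := hΦ.strictMonoOn hX hX0 hX1
  have hmem : ∀ t x, clampedFlow Φ t x ∈ I := fun t x => hΦ.mapsTo t (projIcc 0 1 _ x).2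
  exact
    { apply_zero := hΦ.apply_eq_self_of_eq_zero hX (left_mem_Icc.2 zero_le_one) hX0
      apply_one := hΦ.apply_eq_self_of_eq_zero hX (right_mem_Icc.2 zero_le_one) hX1
      apply_of_notMem := hΦ.apply_of_notMem
      strictMonoOn := hmono
      hasDerivWithinAt := fun t _ hx => hΦ.hasDerivWithinAt_flowDeriv hX hX' (hmono t) hx
      continuous_clampedFlow := hΦ.continuous_clampedFlow hX hM
      continuous_flowDeriv := continuous_flowDeriv (hΦ.continuous_clampedFlow hX hM) hmem hX'c }

/-- The pullback of `g(x) dx` by `Φ s`; for `g = X''` it is `∂ᵤ (X' (Φ s u))`, whose integral over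
`s ∈ [0,t]` is `∂ᵤ log ∂ᵤΦ t`. -/
def pullbackDensity (g X' : ℝ → ℝ) (Φ : ℝ → ℝ → ℝ) (s u : ℝ) : ℝ :=
  g (clampedFlow Φ s u) * flowDeriv X' Φ s u

def logDerivDensity (g X' : ℝ → ℝ) (Φ : ℝ → ℝ → ℝ) (t u : ℝ) : ℝ :=
  ∫ s in (0:ℝ)..t, pullbackDensity g X' Φ s u

theorem pullbackDensity_of_mem {g X' : ℝ → ℝ} {Φ : ℝ → ℝ → ℝ} {s u : ℝ} (hu : u ∈ I) :
    pullbackDensity g X' Φ s u = flowDeriv X' Φ s u * g (Φ s u) := by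
  rw [pullbackDensity, clampedFlow_of_mem hu, mul_comm]

namespace IsC1Flow

variable {X' g : ℝ → ℝ} {Φ : ℝ → ℝ → ℝ}

theorem mapsTo (hΦ : IsC1Flow X' Φ) (t : ℝ) : MapsTo (Φ t) I I := fun _ hx =>
  ⟨hΦ.apply_zero t ▸ (hΦ.strictMonoOn t).monotoneOn (left_mem_Icc.2 zero_le_one) hx hx.1,
    hΦ.apply_one t ▸ (hΦ.strictMonoOn t).monotoneOn hx (right_mem_Icc.2 zero_le_one) hx.2⟩

theorem continuous_apply (hΦ : IsC1Flow X' Φ) {x : ℝ} (hx : x ∈ I) :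
    Continuous fun t => Φ t x := by
  simpa only [clampedFlow_of_mem hx] using hΦ.continuous_clampedFlow.uncurry_right x

theorem bijOn (hΦ : IsC1Flow X' Φ) (t : ℝ) : BijOn (Φ t) I I := by
  have himage : Φ t '' I = I := by
    rw [ContinuousOn.image_Icc_of_monotoneOn zero_le_one
      (fun x hx => (hΦ.hasDerivWithinAt t x hx).continuousWithinAt) (hΦ.strictMonoOn t).monotoneOn,
      hΦ.apply_zero, hΦ.apply_one]
  simpa only [himage] using (hΦ.strictMonoOn t).injOn.bijOn_image

theorem setIntegral_Icc_flowDeriv_mul_comp (hΦ : IsC1Flow X' Φ) (t : ℝ) {x : ℝ} (hx : x ∈ I)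
    (G : ℝ → ℝ) :
    ∫ u in Icc 0 x, flowDeriv X' Φ t u * G (Φ t u) = ∫ u in Icc 0 (Φ t x), G u := by
  have hsub : Icc 0 x ⊆ I := Icc_subset_Icc le_rfl hx.2
  rw [setIntegral_Icc_deriv_mul_comp hx.1 ((hΦ.strictMonoOn t).mono hsub)
    (fun u hu => (hΦ.hasDerivWithinAt t u (hsub hu)).mono hsub) (fun _ _ => flowDeriv_pos.le),
    hΦ.apply_zero]

theorem integrableOn_flowDeriv_mul_comp (hΦ : IsC1Flow X' Φ) (t : ℝ) {G : ℝ → ℝ}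
    (hG : IntegrableOn G I) : IntegrableOn (fun u => flowDeriv X' Φ t u * G (Φ t u)) I :=
  integrableOn_Icc_deriv_mul_comp zero_le_one (hΦ.strictMonoOn t) (hΦ.hasDerivWithinAt t)
    (fun _ _ => flowDeriv_pos.le) (by rwa [hΦ.apply_zero, hΦ.apply_one])

theorem setIntegral_Icc_pullbackDensity (hΦ : IsC1Flow X' Φ) (s : ℝ) {x : ℝ} (hx : x ∈ I) :
    ∫ u in Icc 0 x, pullbackDensity g X' Φ s u = ∫ u in Icc 0 (Φ s x), g u := by
  rw [← hΦ.setIntegral_Icc_flowDeriv_mul_comp s hx]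
  exact setIntegral_congr_fun measurableSet_Icc fun u hu =>
    pullbackDensity_of_mem ⟨hu.1, hu.2.trans hx.2⟩

theorem integrableOn_pullbackDensity (hΦ : IsC1Flow X' Φ) (hg : IntegrableOn g I) (s : ℝ) :
    IntegrableOn (pullbackDensity g X' Φ s) I :=
  (hΦ.integrableOn_flowDeriv_mul_comp s hg).congr_fun (fun _ hu => (pullbackDensity_of_mem hu).symm)
    measurableSet_Icc

theorem setIntegral_abs_pullbackDensity (hΦ : IsC1Flow X' Φ) (s : ℝ) :
    ∫ u in I, |pullbackDensity g X' Φ s u| = ∫ u in I, |g u| := by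
  have h := hΦ.setIntegral_Icc_flowDeriv_mul_comp s (right_mem_Icc.2 zero_le_one) fun v => |g v|
  rw [hΦ.apply_one] at h
  rw [← h]
  exact setIntegral_congr_fun measurableSet_Icc fun u hu => by
    rw [pullbackDensity_of_mem hu, abs_mul, abs_of_pos flowDeriv_pos]

theorem integrable_pullbackDensity (hΦ : IsC1Flow X' Φ) (hgm : StronglyMeasurable g)
    (hg : IntegrableOn g I) (a b : ℝ) :
    Integrable (Function.uncurry (pullbackDensity g X' Φ))
      ((volume.restrict (uIoc a b)).prod (volume.restrict I)) := by
  have hmeas : StronglyMeasurable (Function.uncurry (pullbackDensity g X' Φ)) :=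
    (hgm.comp_measurable hΦ.continuous_clampedFlow.measurable).mul
      hΦ.continuous_flowDeriv.stronglyMeasurable
  rw [integrable_prod_iff hmeas.aestronglyMeasurable]
  refine ⟨ae_of_all _ fun s => hΦ.integrableOn_pullbackDensity hg s, ?_⟩
  simp only [Function.uncurry_apply_pair, Real.norm_eq_abs, hΦ.setIntegral_abs_pullbackDensity]
  exact (integrable_const (∫ u in I, |g u|) :
    Integrable _ (volume.restrict (Ioc (a ⊓ b) (a ⊔ b))))

theorem integral_integral_abs_pullbackDensity (hΦ : IsC1Flow X' Φ) (hgm : StronglyMeasurable g)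
    (hg : IntegrableOn g I) (a b : ℝ) :
    ∫ u in I, ∫ s in uIoc a b, |pullbackDensity g X' Φ s u| = |b - a| * ∫ u in I, |g u| := by
  rw [← integral_integral_swap (f := fun s u => |pullbackDensity g X' Φ s u|)
    (hΦ.integrable_pullbackDensity hgm hg a b).norm]
  simp only [hΦ.setIntegral_abs_pullbackDensity, setIntegral_const, smul_eq_mul, uIoc,
    Real.volume_real_Ioc_of_le inf_le_sup, max_sub_min_eq_abs', abs_sub_comm]

theorem ae_intervalIntegrable_pullbackDensity (hΦ : IsC1Flow X' Φ) (hgm : StronglyMeasurable g)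
    (hg : IntegrableOn g I) :
    ∀ᵐ u ∂volume.restrict I, ∀ a b, IntervalIntegrable (pullbackDensity g X' Φ · u) volume a b := by
  have hn : ∀ n : ℕ, ∀ᵐ u ∂volume.restrict I,
      IntegrableOn (pullbackDensity g X' Φ · u) (Icc (-n : ℝ) n) := fun n => by
    filter_upwards [(hΦ.integrable_pullbackDensity hgm hg (-n) n).prod_left_ae] with u hu
    rw [uIoc_of_le (neg_le_self n.cast_nonneg)] at hu
    rwa [integrableOn_Icc_iff_integrableOn_Ioc]
  filter_upwards [ae_all_iff.2 hn] with u hu a b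
  obtain ⟨n, hab⟩ := exists_nat_ge (max |a| |b|)
  rw [max_le_iff] at hab
  rw [intervalIntegrable_iff']
  exact (hu n).mono_set (uIcc_subset_Icc (abs_le.1 hab.1) (abs_le.1 hab.2))

theorem integrableOn_logDerivDensity (hΦ : IsC1Flow X' Φ) (hgm : StronglyMeasurable g)
    (hg : IntegrableOn g I) (t : ℝ) : IntegrableOn (logDerivDensity g X' Φ t) I := by
  refine (((hΦ.integrable_pullbackDensity hgm hg 0 t).integral_prod_right).const_mul
    (if (0:ℝ) ≤ t then (1:ℝ) else -1)).congr (ae_of_all _ fun u => ?_)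
  rw [logDerivDensity, intervalIntegral.intervalIntegral_eq_integral_uIoc, smul_eq_mul]
  rfl

theorem intervalIntegral_logDerivDensity (hΦ : IsC1Flow X' Φ) (hgm : StronglyMeasurable g)
    (hg : IntegrableOn g I) (hprim : ∀ x ∈ I, X' x = X' 0 + ∫ t in (0:ℝ)..x, g t)
    (t : ℝ) {x : ℝ} (hx : x ∈ I) :
    ∫ u in (0:ℝ)..x, logDerivDensity g X' Φ t u = ∫ s in (0:ℝ)..t, (X' (Φ s x) - X' 0) := by
  have hint : Integrable (Function.uncurry (pullbackDensity g X' Φ))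
      ((volume.restrict (uIoc 0 t)).prod (volume.restrict (Ioc 0 x))) := by
    have h := hΦ.integrable_pullbackDensity hgm hg 0 t
    rw [Measure.prod_restrict] at h ⊢
    exact h.mono_measure (Measure.restrict_mono
      (prod_mono le_rfl (Ioc_subset_Icc_self.trans (Icc_subset_Icc le_rfl hx.2))) le_rfl)
  rw [intervalIntegral.integral_of_le hx.1]
  simp only [logDerivDensity]
  rw [← intervalIntegral_integral_swap hint]
  refine intervalIntegral.integral_congr fun s _ => ?_
  have hΦx := hΦ.mapsTo s hx
  rw [← integral_Icc_eq_integral_Ioc, hΦ.setIntegral_Icc_pullbackDensity s hx, hprim _ hΦx,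
    integral_Icc_eq_integral_Ioc, ← intervalIntegral.integral_of_le hΦx.1]
  ring

theorem log_flowDeriv (hΦ : IsC1Flow X' Φ) (hX'c : ContinuousOn X' I)
    (hgm : StronglyMeasurable g) (hg : IntegrableOn g I)
    (hprim : ∀ x ∈ I, X' x = X' 0 + ∫ t in (0:ℝ)..x, g t) (t : ℝ) {x : ℝ} (hx : x ∈ I) :
    Real.log (flowDeriv X' Φ t x) =
      Real.log (flowDeriv X' Φ t 0) + ∫ u in (0:ℝ)..x, logDerivDensity g X' Φ t u := by
  have h0 : (0:ℝ) ∈ I := left_mem_Icc.2 zero_le_one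
  have hcont : Continuous fun s => X' (Φ s x) :=
    hX'c.comp_continuous (hΦ.continuous_apply hx) fun s => hΦ.mapsTo s hx
  rw [hΦ.intervalIntegral_logDerivDensity hgm hg hprim t hx, flowDeriv_of_mem hx,
    flowDeriv_of_mem h0, Real.log_exp, Real.log_exp,
    intervalIntegral.integral_sub (hcont.intervalIntegrable _ _) intervalIntegrable_const]
  simp only [hΦ.apply_zero]
  ring

theorem integral_abs_logDerivDensity_sub_le (hΦ : IsC1Flow X' Φ) (hgm : StronglyMeasurable g)
    (hg : IntegrableOn g I) (t t₀ : ℝ) :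
    ∫ u in I, |logDerivDensity g X' Φ t u - logDerivDensity g X' Φ t₀ u| ≤
      |t - t₀| * ∫ u in I, |g u| := by
  rw [← hΦ.integral_integral_abs_pullbackDensity hgm hg t₀ t]
  refine integral_mono_ae
    ((hΦ.integrableOn_logDerivDensity hgm hg t).sub (hΦ.integrableOn_logDerivDensity hgm hg t₀)).abs
    (by simpa only [Real.norm_eq_abs, Function.uncurry_apply_pair] using
      (hΦ.integrable_pullbackDensity hgm hg t₀ t).integral_norm_prod_right) ?_
  filter_upwards [hΦ.ae_intervalIntegrable_pullbackDensity hgm hg] with u hu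
  rw [logDerivDensity, logDerivDensity,
    intervalIntegral.integral_interval_sub_left (hu 0 t) (hu 0 t₀)]
  simpa only [Real.norm_eq_abs] using
    intervalIntegral.norm_integral_le_integral_norm_uIoc (f := (pullbackDensity g X' Φ · u))

end IsC1Flow

theorem supDist01_le {f g : ℝ → ℝ} {C : ℝ} (h : ∀ x ∈ I, |f x - g x| ≤ C) :
    supDist01 f g ≤ C := by
  have : Nonempty I := ⟨⟨0, left_mem_Icc.2 zero_le_one⟩⟩
  exact ciSup_le fun x => h x x.2

def IsC1Flow.toC1acDiffeo {X' g : ℝ → ℝ} {Φ : ℝ → ℝ → ℝ} (hΦ : IsC1Flow X' Φ)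
    (hX'c : ContinuousOn X' I) (hgm : StronglyMeasurable g) (hg : IntegrableOn g I)
    (hprim : ∀ x ∈ I, X' x = X' 0 + ∫ t in (0:ℝ)..x, g t) (t : ℝ) : C1acDiffeo where
  toFun := Φ t
  derivFun := flowDeriv X' Φ t
  map_zero := hΦ.apply_zero t
  map_one := hΦ.apply_one t
  fixes_outside := hΦ.apply_of_notMem t
  bijOn := hΦ.bijOn t
  hasDeriv := hΦ.hasDerivWithinAt t
  derivFun_cont := (hΦ.continuous_flowDeriv.comp (Continuous.prodMk_right t)).continuousOn
  derivFun_pos _ _ := flowDeriv_pos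
  dlog := logDerivDensity g X' Φ t
  dlog_int := hΦ.integrableOn_logDerivDensity hgm hg t
  dlog_prim _ hx := hΦ.log_flowDeriv hX'c hgm hg hprim t hx

/-- If `X` is a `C^{1+ac}` vector field on `[0,1]` (vanishing at the endpoints), with
derivative `X'` admitting the `L¹` density `h` (so that `var(DX) = ‖h‖_{L¹}`), then its flow
`Φ` is a `C^{1+ac}` flow: each time-`t` map is a `C^{1+ac}` diffeomorphism, `t ↦ Φ t` is
continuous for the `C^{1+ac}` topology, and `var(log DΦᵗ) ≤ |t| · var(DX)`. -/
theorem flow_of_C1ac_vector_field_is_C1ac_flow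
    (X X' h : ℝ → ℝ) (Φ : ℝ → ℝ → ℝ)
    (hX0 : X 0 = 0) (hX1 : X 1 = 0)
    (hXderiv : ∀ x ∈ Icc (0:ℝ) 1, HasDerivWithinAt X (X' x) (Icc (0:ℝ) 1) x)
    (hX'cont : ContinuousOn X' (Icc (0:ℝ) 1))
    (hhInt : IntegrableOn h (Icc (0:ℝ) 1))
    (hprim : ∀ x ∈ Icc (0:ℝ) 1, X' x = X' 0 + ∫ t in (0:ℝ)..x, h t)
    -- `Φ` is the flow of `X`
    (hΦzero : ∀ x : ℝ, Φ 0 x = x)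
    (hΦadd : ∀ s t : ℝ, ∀ x : ℝ, Φ (s + t) x = Φ s (Φ t x))
    (hΦout : ∀ t : ℝ, ∀ x ∉ Icc (0:ℝ) 1, Φ t x = x)
    (hΦode : ∀ x ∈ Icc (0:ℝ) 1, ∀ t : ℝ, HasDerivAt (fun τ => Φ τ x) (X (Φ t x)) t) :
    ∃ F : ℝ → C1acDiffeo,
      (∀ t : ℝ, ∀ x : ℝ, (F t).toFun x = Φ t x) ∧
      -- `var(log DΦᵗ) ≤ |t| · var(DX)`
      (∀ t : ℝ, (∫ x in Icc (0:ℝ) 1, |(F t).dlog x|) ≤ |t| * ∫ x in Icc (0:ℝ) 1, |h x|) ∧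
      -- `t ↦ Φᵗ` is continuous in the `C^{1+ac}` topology
      (∀ t₀ : ℝ, ∀ ε > (0:ℝ), ∃ δ > (0:ℝ), ∀ t : ℝ, |t - t₀| < δ →
        dist1ac (F t) (F t₀) < ε) := by
  have hΦ : IsFlowOn X I Φ := ⟨hΦzero, hΦadd, hΦout, hΦode⟩
  have hC1 := hΦ.isC1Flow hX0 hX1 hXderiv hX'cont
  -- a Borel representative of `h`, so that `(s, u) ↦ h (Φ s u)` is measurable
  obtain ⟨g, hgm, hhg⟩ := hhInt.aestronglyMeasurable
  have hg : IntegrableOn g I := hhInt.congr hhg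
  have hgprim : ∀ x ∈ I, X' x = X' 0 + ∫ t in (0:ℝ)..x, g t := fun x hx => by
    rw [hprim x hx, intervalIntegral.integral_congr_ae_restrict]
    exact ae_restrict_of_ae_restrict_of_subset (uIoc_subset_uIcc.trans
      (uIcc_subset_Icc (left_mem_Icc.2 zero_le_one) hx)) hhg
  have habs : ∫ x in I, |h x| = ∫ x in I, |g x| := integral_congr_ae (hhg.fun_comp abs)
  obtain ⟨M, hM⟩ := isCompact_Icc.exists_nnnorm_le_of_continuousOn
    (fun x hx => (hXderiv x hx).continuousWithinAt)
  set F := hC1.toC1acDiffeo hX'cont hgm hg hgprim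
  set L : ℝ := M + ∫ x in I, |g x|
  have hdist : ∀ t t₀, dist1ac (F t) (F t₀) ≤ L * |t - t₀| := fun t t₀ => by
    rw [add_mul, mul_comm (∫ x in I, |g x|)]
    exact add_le_add (supDist01_le fun x hx => (hΦ.lipschitzWith_apply hM hx).dist_le_mul t t₀)
      (hC1.integral_abs_logDerivDensity_sub_le hgm hg t t₀)
  refine ⟨F, fun _ _ => rfl, fun t => ?_, fun t₀ ε hε => ?_⟩
  · simpa [F, IsC1Flow.toC1acDiffeo, logDerivDensity, habs] using
      hC1.integral_abs_logDerivDensity_sub_le hgm hg t 0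
  · have hL : 0 < L + 1 := by positivity
    refine ⟨ε / (L + 1), div_pos hε hL, fun t ht => ?_⟩
    calc dist1ac (F t) (F t₀) ≤ L * |t - t₀| := hdist t t₀
      _ ≤ (L + 1) * |t - t₀| := by gcongr; linarith
      _ < ε := by rwa [lt_div_iff₀ hL, mul_comm] at ht
end
end
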